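/- arXiv:1706.08541 — 8 statements merged into one kernel-verified Lean document; each statement's English description precedes it below -/
import Mathlib

section
/- Let A be a symmetric n×n real matrix, let C be an r×n real matrix with r < n and rank C = r, and suppose there is μ > 0 such that ⟨Ax, x⟩ ≥ μ⟨x, x⟩ for every x ∈ ℝⁿ with Cx = 0. Then there exist ρ with 0 < ρ < μ and k₀ > 0 such that for every k ≥ k₀ and every x ∈ ℝⁿ one has ⟨(A + k CᵀC)x, x⟩ ≥ ρ⟨x, x⟩. -/
/-!
Split `x = v + w` with `v ∈ ker C` and `w ⊥ ker C`. On `v` the form of `A` is at least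
`μ ‖v‖²`, the cross terms and the form on `w` are bounded by `‖A‖`, and `C` is bounded below
on `(ker C)ᗮ`, say `c ‖w‖² ≤ ‖C w‖² = ‖C x‖²`. This leaves the binary quadratic form
`μ a² - 2 ‖A‖ a b + (k c - ‖A‖) b²` in `(a, b) = (‖v‖, ‖w‖)`, which dominates `ρ (a² + b²)`
for any `ρ < μ` once `k` is large.
-/

open Matrix Filter

theorem mul_sq_add_sq_le_quadratic {μ ρ M K : ℝ} (hρ : ρ < μ) (hK : M + ρ + M ^ 2 / (μ - ρ) ≤ K)
    (a b : ℝ) : ρ * (a ^ 2 + b ^ 2) ≤ μ * a ^ 2 - 2 * M * a * b + (K - M) * b ^ 2 := by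
  have hμρ : 0 < μ - ρ := sub_pos.2 hρ
  have hsq : 0 ≤ (μ - ρ) * a ^ 2 - 2 * M * a * b + M ^ 2 / (μ - ρ) * b ^ 2 := by
    have key : (μ - ρ) * ((μ - ρ) * a ^ 2 - 2 * M * a * b + M ^ 2 / (μ - ρ) * b ^ 2) =
        ((μ - ρ) * a - M * b) ^ 2 := by
      field_simp
      ring
    exact (mul_nonneg_iff_of_pos_left hμρ).1 (key ▸ sq_nonneg _)
  nlinarith [mul_nonneg (sub_nonneg.2 hK) (sq_nonneg b)]

section InnerProductSpace

variable {E F : Type*} [NormedAddCommGroup E] [InnerProductSpace ℝ E] [FiniteDimensional ℝ E]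
  [NormedAddCommGroup F] [NormedSpace ℝ F]

theorem LinearMap.exists_norm_le_mul_norm_of_mem_orthogonal_ker (L : E →ₗ[ℝ] F) :
    ∃ K : ℝ, 0 < K ∧ ∀ w ∈ (LinearMap.ker L)ᗮ, ‖w‖ ≤ K * ‖L w‖ := by
  have hker : LinearMap.ker (L ∘ₗ (LinearMap.ker L)ᗮ.subtype) = ⊥ := by
    rw [LinearMap.ker_comp, ← Submodule.disjoint_iff_comap_eq_bot]
    exact (Submodule.orthogonal_disjoint _).symm
  obtain ⟨K, hK0, hK⟩ := (L ∘ₗ (LinearMap.ker L)ᗮ.subtype).exists_antilipschitzWith hker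
  exact ⟨K, hK0, fun w hw => ZeroHomClass.bound_of_antilipschitz _ hK ⟨w, hw⟩⟩

theorem eventually_mul_norm_sq_le_inner_add_mul_norm_sq (T : E →ₗ[ℝ] E) (L : E →ₗ[ℝ] F)
    {μ ρ : ℝ} (hρ : ρ < μ) (hT : ∀ v ∈ LinearMap.ker L, μ * ‖v‖ ^ 2 ≤ inner ℝ (T v) v) :
    ∀ᶠ k in atTop, ∀ x, ρ * ‖x‖ ^ 2 ≤ inner ℝ (T x) x + k * ‖L x‖ ^ 2 := by
  obtain ⟨K, hK0, hK⟩ := L.exists_norm_le_mul_norm_of_mem_orthogonal_ker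
  set M := ‖LinearMap.toContinuousLinearMap T‖
  have hM : ∀ a b, -(M * ‖a‖ * ‖b‖) ≤ inner ℝ (T a) b := fun a b =>
    calc -(M * ‖a‖ * ‖b‖) ≤ -(‖T a‖ * ‖b‖) := by
          gcongr; exact (LinearMap.toContinuousLinearMap T).le_opNorm a
      _ ≤ inner ℝ (T a) b := neg_le_of_abs_le (abs_real_inner_le_norm _ _)
  filter_upwards [eventually_ge_atTop 0,
    eventually_ge_atTop (K ^ 2 * (M + ρ + M ^ 2 / (μ - ρ)))] with k hk0 hk x
  obtain ⟨v, hv, w, hw, rfl⟩ := (LinearMap.ker L).exists_add_mem_mem_orthogonal x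
  have hnorm : ‖v + w‖ ^ 2 = ‖v‖ ^ 2 + ‖w‖ ^ 2 := by
    simp only [sq]
    exact norm_add_sq_eq_norm_sq_add_norm_sq_real (Submodule.inner_right_of_mem_orthogonal hv hw)
  have hLx : L (v + w) = L w := by rw [map_add, LinearMap.mem_ker.1 hv, zero_add]
  have hinner : inner ℝ (T (v + w)) (v + w) =
      inner ℝ (T v) v + inner ℝ (T v) w + inner ℝ (T w) v + inner ℝ (T w) w := by
    rw [map_add, inner_add_left, inner_add_right, inner_add_right]
    ring
  have hLw : k / K ^ 2 * ‖w‖ ^ 2 ≤ k * ‖L w‖ ^ 2 := by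
    have : ‖w‖ ^ 2 ≤ K ^ 2 * ‖L w‖ ^ 2 := by
      rw [← mul_pow]; exact pow_le_pow_left₀ (norm_nonneg w) (hK w hw) 2
    calc k / K ^ 2 * ‖w‖ ^ 2 ≤ k / K ^ 2 * (K ^ 2 * ‖L w‖ ^ 2) := by gcongr
      _ = k * ‖L w‖ ^ 2 := by field_simp
  have hQ : M + ρ + M ^ 2 / (μ - ρ) ≤ k / K ^ 2 := by
    rw [le_div_iff₀ (by positivity)]; linarith
  have := mul_sq_add_sq_le_quadratic hρ hQ ‖v‖ ‖w‖
  rw [hnorm, hinner, hLx]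
  linarith [hT v hv, hM v w, hM w v, hM w w]

end InnerProductSpace

theorem EuclideanSpace.inner_toLp_toLp_real {ι : Type*} [Fintype ι] (x y : ι → ℝ) :
    inner ℝ (WithLp.toLp 2 x : EuclideanSpace ℝ ι) (WithLp.toLp 2 y) = x ⬝ᵥ y := by
  rw [EuclideanSpace.inner_toLp_toLp, star_trivial, dotProduct_comm]

theorem EuclideanSpace.norm_toLp_sq_real {ι : Type*} [Fintype ι] (x : ι → ℝ) :
    ‖(WithLp.toLp 2 x : EuclideanSpace ℝ ι)‖ ^ 2 = x ⬝ᵥ x := by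
  rw [← real_inner_self_eq_norm_sq, EuclideanSpace.inner_toLp_toLp_real]

theorem debreu_lemma_general {n r : ℕ}
    (A : Matrix (Fin n) (Fin n) ℝ)
    (C : Matrix (Fin r) (Fin n) ℝ)
    (μ : ℝ) (hμ : 0 < μ)
    (hpos : ∀ x : Fin n → ℝ, C.mulVec x = 0 → A.mulVec x ⬝ᵥ x ≥ μ * (x ⬝ᵥ x)) :
    ∃ ρ : ℝ, 0 < ρ ∧ ρ < μ ∧ ∃ k₀ : ℝ, 0 < k₀ ∧ ∀ k : ℝ, k₀ ≤ k →
      ∀ x : Fin n → ℝ, (A + k • (Cᵀ * C)).mulVec x ⬝ᵥ x ≥ ρ * (x ⬝ᵥ x) := by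
  have hker : ∀ v ∈ LinearMap.ker (toLpLin 2 2 C), μ * ‖v‖ ^ 2 ≤ inner ℝ (toLpLin 2 2 A v) v := by
    rintro ⟨v⟩ hv
    have hCv : C *ᵥ v = 0 := congrArg WithLp.ofLp (LinearMap.mem_ker.1 hv)
    simpa [toLpLin_apply, ← EuclideanSpace.norm_toLp_sq_real, EuclideanSpace.inner_toLp_toLp_real]
      using hpos _ hCv
  obtain ⟨k₀, hk₀⟩ := eventually_atTop.1
    (eventually_mul_norm_sq_le_inner_add_mul_norm_sq _ _ (half_lt_self hμ) hker)
  refine ⟨μ / 2, half_pos hμ, half_lt_self hμ, max k₀ 1, by positivity, fun k hk x => ?_⟩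
  have hform : (A + k • (Cᵀ * C)) *ᵥ x ⬝ᵥ x = A *ᵥ x ⬝ᵥ x + k * (C *ᵥ x ⬝ᵥ C *ᵥ x) := by
    rw [add_mulVec, add_dotProduct, smul_mulVec, smul_dotProduct, smul_eq_mul, ← mulVec_mulVec,
      mulVec_transpose, ← dotProduct_mulVec]
  have := hk₀ k (le_of_max_le_left hk) (WithLp.toLp 2 x)
  rw [hform]
  simpa [toLpLin_apply, EuclideanSpace.norm_toLp_sq_real, EuclideanSpace.inner_toLp_toLp_real]
    using this

/-- **Debreu's Lemma.** If `A` is a symmetric `n × n` real matrix, `C` an `r × n` real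
matrix with `r < n` and `rank C = r`, and `⟨Ax, x⟩ ≥ μ ⟨x, x⟩` for all `x` with `Cx = 0`,
then there are `0 < ρ < μ` and `k₀ > 0` such that for all `k ≥ k₀` and all `x`,
`⟨(A + k CᵀC) x, x⟩ ≥ ρ ⟨x, x⟩`. -/
theorem debreu_lemma {n r : ℕ} (hrn : r < n)
    (A : Matrix (Fin n) (Fin n) ℝ) (hA : A.IsSymm)
    (C : Matrix (Fin r) (Fin n) ℝ) (hC : C.rank = r)
    (μ : ℝ) (hμ : 0 < μ)
    (hpos : ∀ x : Fin n → ℝ, C.mulVec x = 0 → A.mulVec x ⬝ᵥ x ≥ μ * (x ⬝ᵥ x)) :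
    ∃ ρ : ℝ, 0 < ρ ∧ ρ < μ ∧ ∃ k₀ : ℝ, 0 < k₀ ∧ ∀ k : ℝ, k₀ ≤ k →
      ∀ x : Fin n → ℝ, (A + k • (Cᵀ * C)).mulVec x ⬝ᵥ x ≥ ρ * (x ⬝ᵥ x) :=
  debreu_lemma_general A C μ hμ hpos
end

section
/- Let f : ℝⁿ → ℝ be convex and continuous, c_i : ℝⁿ → ℝ concave and continuous (i = 1,…,m), Ω = {x : c_i(x) ≥ 0 for all i}, and assume the solution set X* = {x ∈ Ω : f(x) = min_Ω f} is nonempty and bounded. Then for every y ∈ Ω with c_i(y) > 0 for all i and every k > 0, the extended relaxation set Ω_{−1/k}(y) = {x ∈ ℝⁿ : c_i(x) ≥ −1/k for i = 1,…,m, and f(x) ≤ f(y)} is convex and bounded. -/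
/-!
The relaxed set is an intersection of superlevel sets of the concave `cᵢ` and a sublevel set of
the convex `f`, hence convex. For boundedness, fix a solution `x̂` and the convex continuous penalty
`g x = max (f x - f x̂) (∑ᵢ (cᵢ x)⁻)`: its zero sublevel set is exactly `X*`, and the relaxed set
lies in one of its sublevel sets. A continuous convex function on a proper space with one nonempty
bounded sublevel set has all sublevel sets bounded: if `{g ≤ a}` lies in the open ball `B(x₀, R)`
with `g x₀ ≤ a`, then `g ≥ a + δ` on the compact sphere `∂B(x₀, R)` for some `δ > 0`, and
convexity along the segment from `x₀` gives `g x ≥ a + δ ‖x - x₀‖ / R` outside the ball.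
-/

open Set Bornology Metric

section SublevelSets

variable {E : Type*} [NormedAddCommGroup E] [NormedSpace ℝ E] {g : E → ℝ}

theorem ConvexOn.add_mul_dist_div_le (hg : ConvexOn ℝ univ g) {x₀ x : E} {a δ R : ℝ}
    (hx₀ : g x₀ ≤ a) (hR : 0 < R) (hsphere : ∀ z ∈ sphere x₀ R, a + δ ≤ g z)
    (hx : R ≤ dist x x₀) : a + δ * dist x x₀ / R ≤ g x := by
  set r := dist x x₀
  have hr : 0 < r := hR.trans_le hx
  set t := R / r
  have ht₀ : 0 ≤ t := by positivity
  have ht₁ : t ≤ 1 := (div_le_one hr).2 hx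
  have hz : (1 - t) • x₀ + t • x ∈ sphere x₀ R := by
    rw [mem_sphere, dist_eq_norm, show (1 - t) • x₀ + t • x - x₀ = t • (x - x₀) by module,
      norm_smul, Real.norm_of_nonneg ht₀, ← dist_eq_norm, div_mul_cancel₀ _ hr.ne']
  have hconv : g ((1 - t) • x₀ + t • x) ≤ (1 - t) * a + t * g x := by
    calc g ((1 - t) • x₀ + t • x) ≤ (1 - t) * g x₀ + t * g x :=
          hg.2 trivial trivial (by linarith) ht₀ (by ring)
      _ ≤ (1 - t) * a + t * g x := by gcongr
  have hδ : δ ≤ t * (g x - a) := by linarith [hsphere _ hz]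
  calc a + δ * r / R ≤ a + t * (g x - a) * r / R := by gcongr
    _ = g x := by
      rw [mul_right_comm, div_mul_cancel₀ _ hr.ne', mul_div_cancel_left₀ _ hR.ne']
      ring

theorem ConvexOn.isBounded_setOf_le_of_isBounded [ProperSpace E] (hg : ConvexOn ℝ univ g)
    (hgc : Continuous g) {a : ℝ} (hne : {x | g x ≤ a}.Nonempty)
    (hbd : IsBounded {x | g x ≤ a}) (b : ℝ) : IsBounded {x | g x ≤ b} := by
  obtain ⟨x₀, hx₀⟩ := hne
  obtain ⟨R, hR⟩ := (isBounded_iff_subset_ball x₀).1 hbd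
  have hRpos : 0 < R := pos_of_mem_ball (hR hx₀)
  obtain ⟨a', ha', hsphere⟩ := (isCompact_sphere x₀ R).exists_forall_le' hgc.continuousOn
    (a := a) fun z hz => not_le.1 fun hza =>
      (mem_sphere.1 hz).not_lt (mem_ball.1 (hR hza))
  refine (isBounded_iff_subset_closedBall x₀).2 ⟨max R ((b - a) * R / (a' - a)), fun x hx => ?_⟩
  rw [mem_closedBall, le_max_iff, or_iff_not_imp_left, not_le]
  intro hxR
  have hgrowth := hg.add_mul_dist_div_le hx₀ hRpos (δ := a' - a)
    (fun z hz => by linarith [hsphere z hz]) hxR.le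
  have hbound : (a' - a) * dist x x₀ / R ≤ b - a := by linarith [show g x ≤ b from hx]
  rw [div_le_iff₀ hRpos] at hbound
  rw [le_div_iff₀ (sub_pos.2 ha')]
  linarith

end SublevelSets

theorem ConvexOn.finset_sum {𝕜 E β ι : Type*} [Semiring 𝕜] [PartialOrder 𝕜] [AddCommMonoid E]
    [AddCommMonoid β] [PartialOrder β] [IsOrderedAddMonoid β] [SMul 𝕜 E] [Module 𝕜 β]
    {s : Set E} {t : Finset ι} {φ : ι → E → β} (hφ : ∀ i ∈ t, ConvexOn 𝕜 s (φ i))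
    (hs : Convex 𝕜 s) : ConvexOn 𝕜 s fun x => ∑ i ∈ t, φ i x := by
  classical
  induction t using Finset.induction_on with
  | empty => simpa using convexOn_const 0 hs
  | insert i t hi ih =>
    simp only [Finset.sum_insert hi]
    exact (hφ i (Finset.mem_insert_self i t)).add
      (ih fun j hj => hφ j (Finset.mem_insert_of_mem hj))

theorem ConcaveOn.convexOn_negPart {E : Type*} [AddCommMonoid E] [Module ℝ E] {s : Set E}
    {φ : E → ℝ} (hφ : ConcaveOn ℝ s φ) : ConvexOn ℝ s fun x => (φ x)⁻ :=
  hφ.neg.sup (convexOn_const 0 hφ.1)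

section ConstraintViolation

variable {ι E : Type*} [Fintype ι] (c : ι → E → ℝ)

def constraintViolation (x : E) : ℝ := ∑ i, (c i x)⁻

variable {c}

theorem constraintViolation_nonpos_iff {x : E} :
    constraintViolation c x ≤ 0 ↔ ∀ i, 0 ≤ c i x := by
  have hnonneg : ∀ i ∈ Finset.univ, 0 ≤ (c i x)⁻ := fun i _ => negPart_nonneg _
  rw [constraintViolation, (Finset.sum_nonneg hnonneg).ge_iff_eq',
    Finset.sum_eq_zero_iff_of_nonneg hnonneg]
  simp only [Finset.mem_univ, true_implies, negPart_eq_zero]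

theorem constraintViolation_le {x : E} {ε : ℝ} (hε : 0 ≤ ε) (hx : ∀ i, -ε ≤ c i x) :
    constraintViolation c x ≤ Fintype.card ι * ε := by
  calc constraintViolation c x ≤ ∑ _i : ι, ε :=
        Finset.sum_le_sum fun i _ => max_le (by linarith [hx i]) hε
    _ = Fintype.card ι * ε := by simp

theorem convexOn_constraintViolation [AddCommGroup E] [Module ℝ E]
    (hc : ∀ i, ConcaveOn ℝ univ (c i)) : ConvexOn ℝ univ (constraintViolation c) :=
  ConvexOn.finset_sum (fun i _ => (hc i).convexOn_negPart) convex_univ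

theorem continuous_constraintViolation [TopologicalSpace E] (hc : ∀ i, Continuous (c i)) :
    Continuous (constraintViolation c) :=
  continuous_finsetSum _ fun i _ => (hc i).neg.max continuous_const

end ConstraintViolation

theorem extended_relaxation_set_convex_bounded_general {n m : ℕ}
    (f : EuclideanSpace ℝ (Fin n) → ℝ)
    (c : Fin m → EuclideanSpace ℝ (Fin n) → ℝ)
    (hfcont : Continuous f) (hf : ConvexOn ℝ Set.univ f)
    (hccont : ∀ i, Continuous (c i))
    (hc : ∀ i, ConcaveOn ℝ Set.univ (c i))
    (Ω : Set (EuclideanSpace ℝ (Fin n)))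
    (hΩ : Ω = {x | ∀ i, 0 ≤ c i x})
    (Xstar : Set (EuclideanSpace ℝ (Fin n)))
    (hXstar : Xstar = {x | x ∈ Ω ∧ ∀ z ∈ Ω, f x ≤ f z})
    (hne : Xstar.Nonempty) (hbd : Bornology.IsBounded Xstar)
    (y : EuclideanSpace ℝ (Fin n))
    (k : ℝ) (hk : 0 < k) :
    Convex ℝ {x : EuclideanSpace ℝ (Fin n) |
        (∀ i, -1 / k ≤ c i x) ∧ f x ≤ f y} ∧
    Bornology.IsBounded {x : EuclideanSpace ℝ (Fin n) |
        (∀ i, -1 / k ≤ c i x) ∧ f x ≤ f y} := by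
  refine ⟨?_, ?_⟩
  · rw [ofPred_and, ofPred_forall]
    exact (convex_iInter fun i => by simpa using (hc i).convex_ge (-1 / k)).inter
      (by simpa using hf.convex_le (f y))
  subst hΩ
  obtain ⟨xs, hxsΩ, hxsmin⟩ := hXstar ▸ hne
  set g := fun x => max (f x - f xs) (constraintViolation c x)
  have hsolution : {x | g x ≤ 0} = Xstar := by
    ext x
    simp only [hXstar, g, mem_ofPred_eq, max_le_iff, sub_nonpos,
      constraintViolation_nonpos_iff]
    exact ⟨fun ⟨hfx, hcx⟩ => ⟨hcx, fun z hz => hfx.trans (hxsmin z hz)⟩,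
      fun ⟨hcx, hmin⟩ => ⟨hmin xs hxsΩ, hcx⟩⟩
  have hg : ConvexOn ℝ univ g :=
    (hf.sub (concaveOn_const _ convex_univ)).sup (convexOn_constraintViolation hc)
  have hgc : Continuous g :=
    (hfcont.sub continuous_const).max (continuous_constraintViolation hccont)
  refine ((hg.isBounded_setOf_le_of_isBounded hgc (hsolution ▸ hne) (hsolution ▸ hbd))
    (max (f y - f xs) (Fintype.card (Fin m) * (1 / k)))).subset fun x ⟨hcx, hfx⟩ => ?_
  exact max_le_max (sub_le_sub_right hfx _)
    (constraintViolation_le (by positivity) fun i => neg_div k 1 ▸ hcx i)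

/-- Under Assumption A (the solution set `X*` is nonempty and bounded), for every interior
point `y` and every `k > 0`, the extended relaxation set
`Ω_{-1/k}(y) = {x : c i x ≥ -1/k ∀ i, f x ≤ f y}` is convex and bounded. -/
theorem extended_relaxation_set_convex_bounded {n m : ℕ}
    (f : EuclideanSpace ℝ (Fin n) → ℝ)
    (c : Fin m → EuclideanSpace ℝ (Fin n) → ℝ)
    (hfcont : Continuous f) (hf : ConvexOn ℝ Set.univ f)
    (hccont : ∀ i, Continuous (c i))
    (hc : ∀ i, ConcaveOn ℝ Set.univ (c i))
    (Ω : Set (EuclideanSpace ℝ (Fin n)))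
    (hΩ : Ω = {x | ∀ i, 0 ≤ c i x})
    (Xstar : Set (EuclideanSpace ℝ (Fin n)))
    (hXstar : Xstar = {x | x ∈ Ω ∧ ∀ z ∈ Ω, f x ≤ f z})
    (hne : Xstar.Nonempty) (hbd : Bornology.IsBounded Xstar)
    (y : EuclideanSpace ℝ (Fin n)) (hy : ∀ i, 0 < c i y)
    (k : ℝ) (hk : 0 < k) :
    Convex ℝ {x : EuclideanSpace ℝ (Fin n) |
        (∀ i, -1 / k ≤ c i x) ∧ f x ≤ f y} ∧
    Bornology.IsBounded {x : EuclideanSpace ℝ (Fin n) |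
        (∀ i, -1 / k ≤ c i x) ∧ f x ≤ f y} :=
  extended_relaxation_set_convex_bounded_general f c hfcont hf hccont hc Ω hΩ Xstar hXstar hne hbd y
    k hk
end

section
/- Let f : ℝⁿ → ℝ be convex, c_i : ℝⁿ → ℝ concave (i = 1,…,m), y ∈ ℝⁿ, k > 0, and λ ∈ ℝ^m with λ_i ≥ 0 for all i. Then the exterior distance function x ↦ 𝓛_y(x,λ,k) = −ln(f(y) − f(x)) − k⁻¹ Σ_{i=1}^m λ_i ln(k c_i(x) + 1) is convex on the convex set {x ∈ ℝⁿ : f(x) < f(y) and c_i(x) > −1/k for i = 1,…,m}. -/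
open Real

/-!
The domain is the intersection of a strict sublevel set of the convex `f` with strict
superlevel sets of the concave `c i`, hence convex. On it, `x ↦ f y - f x` and
`x ↦ k * c i x + 1` are concave and positive, and `log` of a positive concave function is
concave because `log` is concave and increasing. The exterior distance function is therefore
`-(concave) - k⁻¹ * (nonnegative combination of concave functions)`, which is convex.
-/

theorem ConcaveOn.sum {𝕜 E β ι : Type*} [Semiring 𝕜] [PartialOrder 𝕜] [AddCommMonoid E]
    [AddCommMonoid β] [PartialOrder β] [IsOrderedAddMonoid β] [SMul 𝕜 E] [Module 𝕜 β]
    {s : Set E} (hs : Convex 𝕜 s) (t : Finset ι) {g : ι → E → β}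
    (hg : ∀ i ∈ t, ConcaveOn 𝕜 s (g i)) : ConcaveOn 𝕜 s fun x => ∑ i ∈ t, g i x := by
  refine ⟨hs, fun x hx y hy a b ha hb hab => ?_⟩
  simp only [Finset.smul_sum, ← Finset.sum_add_distrib]
  exact Finset.sum_le_sum fun i hi => (hg i hi).2 hx hy ha hb hab

theorem ConcaveOn.log {E : Type*} [AddCommMonoid E] [Module ℝ E] {s : Set E} {g : E → ℝ}
    (hg : ConcaveOn ℝ s g) (hpos : ∀ x ∈ s, 0 < g x) :
    ConcaveOn ℝ s fun x => Real.log (g x) := by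
  refine ⟨hg.1, fun x hx y hy a b ha hb hab => ?_⟩
  have hmix : 0 < a • g x + b • g y :=
    convex_Ioi (0 : ℝ) (Set.mem_Ioi.2 (hpos x hx)) (Set.mem_Ioi.2 (hpos y hy)) ha hb hab
  calc a • Real.log (g x) + b • Real.log (g y) ≤ Real.log (a • g x + b • g y) :=
        strictConcaveOn_log_Ioi.concaveOn.2 (hpos x hx) (hpos y hy) ha hb hab
    _ ≤ Real.log (g (a • x + b • y)) := log_le_log hmix (hg.2 hx hy ha hb hab)

theorem convex_setOf_lt_and_forall_lt {𝕜 E β ι : Type*} [Semiring 𝕜] [PartialOrder 𝕜]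
    [AddCommMonoid E] [AddCommMonoid β] [LinearOrder β] [IsOrderedCancelAddMonoid β]
    [Module 𝕜 E] [Module 𝕜 β] [PosSMulStrictMono 𝕜 β] {f : E → β} {c : ι → E → β}
    (hf : ConvexOn 𝕜 Set.univ f) (hc : ∀ i, ConcaveOn 𝕜 Set.univ (c i)) (r t : β) :
    Convex 𝕜 {x | f x < r ∧ ∀ i, t < c i x} := fun _ hx _ hz _ _ ha hb hab =>
  ⟨(hf.convex_lt r ⟨trivial, hx.1⟩ ⟨trivial, hz.1⟩ ha hb hab).2,
    fun i => ((hc i).convex_gt t ⟨trivial, hx.2 i⟩ ⟨trivial, hz.2 i⟩ ha hb hab).2⟩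

/-- The exterior distance function
`𝓛_y(x,λ,k) = -ln (f y - f x) - k⁻¹ ∑ i, λ i * ln (k * c i x + 1)`
is convex on the convex set `{x : f x < f y ∧ c i x > -1/k ∀ i}` whenever `f` is convex,
the `c i` are concave, `k > 0` and `λ ≥ 0`. -/
theorem EDF_convexOn {n m : ℕ}
    (f : EuclideanSpace ℝ (Fin n) → ℝ)
    (c : Fin m → EuclideanSpace ℝ (Fin n) → ℝ)
    (hf : ConvexOn ℝ Set.univ f)
    (hc : ∀ i, ConcaveOn ℝ Set.univ (c i))
    (y : EuclideanSpace ℝ (Fin n))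
    (k : ℝ) (hk : 0 < k)
    (lam : Fin m → ℝ) (hlam : ∀ i, 0 ≤ lam i) :
    Convex ℝ {x : EuclideanSpace ℝ (Fin n) | f x < f y ∧ ∀ i, -1 / k < c i x} ∧
    ConvexOn ℝ {x : EuclideanSpace ℝ (Fin n) | f x < f y ∧ ∀ i, -1 / k < c i x}
      (fun x => -Real.log (f y - f x)
        - k⁻¹ * ∑ i, lam i * Real.log (k * c i x + 1)) := by
  set S := {x : EuclideanSpace ℝ (Fin n) | f x < f y ∧ ∀ i, -1 / k < c i x}
  have hS : Convex ℝ S := convex_setOf_lt_and_forall_lt hf hc (f y) (-1 / k)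
  have hgap : ConcaveOn ℝ S fun x => f y - f x :=
    (concaveOn_const (f y) hS).sub (hf.subset (Set.subset_univ S) hS)
  have hshift (i : Fin m) : ConcaveOn ℝ S fun x => k * c i x + 1 :=
    (((hc i).subset (Set.subset_univ S) hS).smul hk.le).add_const 1
  have hshift_pos (i : Fin m) (x : EuclideanSpace ℝ (Fin n)) (hx : x ∈ S) :
      0 < k * c i x + 1 := by
    have := (div_lt_iff₀ hk).1 (hx.2 i)
    linarith
  have hbarrier : ConcaveOn ℝ S fun x => k⁻¹ * ∑ i, lam i * Real.log (k * c i x + 1) :=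
    (ConcaveOn.sum hS Finset.univ fun i _ =>
      ((hshift i).log (hshift_pos i)).smul (hlam i)).smul (inv_nonneg.2 hk.le)
  exact ⟨hS, (hgap.log fun x hx => sub_pos.2 hx.1).neg.sub hbarrier⟩
end

section
/- Let f, c_i : ℝⁿ → ℝ (i = 1,…,m) be twice differentiable, y ∈ ℝⁿ, and let (x*, λ*) satisfy f(x*) < f(y), c_i(x*) ≥ 0, λ*_i ≥ 0, λ*_i c_i(x*) = 0 for all i, and (f(y) − f(x*))⁻¹ ∇f(x*) = Σ λ*_i ∇c_i(x*). Set Δ = f(y) − f(x*). Then for every k > 0 the Hessian in x of the exterior distance function at (x*, λ*) equals ∇²_{xx}𝓛_y(x*,λ*,k) = Δ⁻² ∇f(x*)∇f(x*)ᵀ + Δ⁻¹ ∇²f(x*) − Σ_{i=1}^m λ*_i ∇²c_i(x*) + k Σ_{i=1}^m λ*_i ∇c_i(x*)∇c_i(x*)ᵀ, i.e. ∇²_{xx}𝓛_y(x*,λ*,k) = ∇²_{xx}L_y(x*,λ*) + k ∇c(x*)ᵀ Λ* ∇c(x*), where Λ* = diag(λ*_i). -/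
open Real RealInnerProductSpace Filter Topology

/-!
The Hessians follow from the scalar chain rule `(φ ∘ h)'' = φ'(h) h'' + φ''(h) h' ⊗ h'`.
For the modified barrier `ψ_k(t) = k⁻¹ ln (k t + 1)` one has `ψ_k'(t) = (k t + 1)⁻¹` and
`ψ_k''(t) = -k (k t + 1)⁻²`. Complementarity `λ_i c_i(x*) = 0` means that every constraint with
`λ_i ≠ 0` is evaluated at `t = 0`, where `ψ_k' = 1` and `ψ_k'' = -k`. Hence the Hessian of
`λ_i ψ_k(c_i)` at `x*` is `λ_i ∇²c_i - k λ_i ∇c_i ∇c_iᵀ`, that of the Lagrangian's `λ_i c_i`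
minus `k λ_i ∇c_i ∇c_iᵀ`.
-/

section SecondDerivative

variable {E : Type*} [NormedAddCommGroup E] [NormedSpace ℝ E] {f g : E → ℝ} {x : E}

theorem fderiv_fderiv_apply_eq_iteratedFDeriv (f : E → ℝ) (x u v : E) :
    fderiv ℝ (fderiv ℝ f) x u v = iteratedFDeriv ℝ 2 f x ![u, v] := by
  simp [iteratedFDeriv_two_apply]

theorem fderiv_fderiv_sub_apply (hf : ContDiffAt ℝ 2 f x) (hg : ContDiffAt ℝ 2 g x) (u v : E) :
    fderiv ℝ (fderiv ℝ (fun y => f y - g y)) x u v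
      = fderiv ℝ (fderiv ℝ f) x u v - fderiv ℝ (fderiv ℝ g) x u v := by
  simp [fderiv_fderiv_apply_eq_iteratedFDeriv, fun_iteratedFDeriv_sub_apply hf hg]

theorem fderiv_fderiv_const_mul_apply (a : ℝ) (hf : ContDiffAt ℝ 2 f x) (u v : E) :
    fderiv ℝ (fderiv ℝ (fun y => a * f y)) x u v = a * fderiv ℝ (fderiv ℝ f) x u v := by
  simp [fderiv_fderiv_apply_eq_iteratedFDeriv, ← smul_eq_mul, iteratedFDeriv_const_smul_apply' hf]

theorem fderiv_fderiv_sum_const_mul_apply {ι : Type*} {s : Finset ι} {a : ι → ℝ}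
    {g : ι → E → ℝ} (hg : ∀ i ∈ s, ContDiffAt ℝ 2 (g i) x) (u v : E) :
    fderiv ℝ (fderiv ℝ (fun y => ∑ i ∈ s, a i * g i y)) x u v
      = ∑ i ∈ s, a i * fderiv ℝ (fderiv ℝ (g i)) x u v := by
  have hag : ∀ i ∈ s, ContDiffAt ℝ 2 (fun y => a i * g i y) x :=
    fun i hi => contDiffAt_const.mul (hg i hi)
  simp only [fderiv_fderiv_apply_eq_iteratedFDeriv, iteratedFDeriv_fun_sum_apply hag,
    sum_apply]
  refine Finset.sum_congr rfl fun i hi => ?_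
  simp only [← fderiv_fderiv_apply_eq_iteratedFDeriv, fderiv_fderiv_const_mul_apply _ (hg i hi)]

theorem fderiv_fderiv_comp_apply {φ φ' : ℝ → ℝ} {φ'' : ℝ}
    (hφ : ∀ᶠ t in 𝓝 (f x), HasDerivAt φ (φ' t) t) (hφ' : HasDerivAt φ' φ'' (f x))
    (hf : ContDiffAt ℝ 2 f x) (u v : E) :
    fderiv ℝ (fderiv ℝ (fun y => φ (f y))) x u v
      = φ' (f x) * fderiv ℝ (fderiv ℝ f) x u v + φ'' * (fderiv ℝ f x u * fderiv ℝ f x v) := by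
  have hfirst : fderiv ℝ (fun y => φ (f y)) =ᶠ[𝓝 x] fun y => φ' (f y) • fderiv ℝ f y := by
    filter_upwards [hf.continuousAt.tendsto.eventually hφ, hf.eventually (by simp)]
      with y hφy hfy
    exact (hφy.comp_hasFDerivAt y (hfy.differentiableAt two_ne_zero).hasFDerivAt).fderiv
  have hsecond : HasFDerivAt (fun y => φ' (f y) • fderiv ℝ f y)
      (φ' (f x) • fderiv ℝ (fderiv ℝ f) x + (φ'' • fderiv ℝ f x).smulRight (fderiv ℝ f x)) x :=
    (hφ'.comp_hasFDerivAt x (hf.differentiableAt two_ne_zero).hasFDerivAt).smul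
      ((hf.fderiv_right (m := 1) le_rfl).differentiableAt one_ne_zero).hasFDerivAt
  rw [hfirst.fderiv_eq, hsecond.fderiv]
  simp only [add_apply, smul_apply, ContinuousLinearMap.smulRight_apply, smul_eq_mul]
  ring

theorem fderiv_fderiv_neg_log_sub_apply {a : ℝ} (hf : ContDiffAt ℝ 2 f x) (hx : f x < a)
    (u v : E) :
    fderiv ℝ (fderiv ℝ (fun y => -log (a - f y))) x u v
      = ((a - f x)⁻¹) ^ 2 * (fderiv ℝ f x u * fderiv ℝ f x v)
        + (a - f x)⁻¹ * fderiv ℝ (fderiv ℝ f) x u v := by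
  have hφ : ∀ᶠ t in 𝓝 (f x), HasDerivAt (fun t => -log (a - t)) (a - t)⁻¹ t := by
    filter_upwards [eventually_lt_nhds hx] with t ht
    exact (((hasDerivAt_id' t).const_sub a).log (sub_ne_zero.mpr ht.ne')).fun_neg.congr_deriv
      (by field_simp)
  have hφ' : HasDerivAt (fun t => (a - t)⁻¹) ((a - f x)⁻¹ ^ 2) (f x) :=
    (((hasDerivAt_id' (f x)).const_sub a).fun_inv (sub_ne_zero.mpr hx.ne')).congr_deriv
      (by field_simp)
  rw [fderiv_fderiv_comp_apply hφ hφ' hf]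
  ring

theorem fderiv_fderiv_inv_mul_log_mul_add_one_apply {k : ℝ} (hk : k ≠ 0)
    (hf : ContDiffAt ℝ 2 f x) (hx : k * f x + 1 ≠ 0) (u v : E) :
    fderiv ℝ (fderiv ℝ (fun y => k⁻¹ * log (k * f y + 1))) x u v
      = (k * f x + 1)⁻¹ * fderiv ℝ (fderiv ℝ f) x u v
        - k * ((k * f x + 1) ^ 2)⁻¹ * (fderiv ℝ f x u * fderiv ℝ f x v) := by
  have hcont : Continuous fun t : ℝ => k * t + 1 := by fun_prop
  have hφ : ∀ᶠ t in 𝓝 (f x),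
      HasDerivAt (fun t => k⁻¹ * log (k * t + 1)) (k * t + 1)⁻¹ t := by
    filter_upwards [hcont.continuousAt.eventually_ne hx] with t ht
    exact ((((hasDerivAt_id' t).const_mul k).add_const 1).log ht).const_mul k⁻¹ |>.congr_deriv
      (by field_simp)
  have hφ' : HasDerivAt (fun t => (k * t + 1)⁻¹) (-k * ((k * f x + 1) ^ 2)⁻¹) (f x) :=
    (((hasDerivAt_id' (f x)).const_mul k).add_const 1).fun_inv hx |>.congr_deriv
      (by field_simp)
  rw [fderiv_fderiv_comp_apply hφ hφ' hf]
  ring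

theorem fderiv_fderiv_modified_barrier_apply_of_complementary {ι : Type*} [Fintype ι]
    {c : ι → E → ℝ} {lam : ι → ℝ} {k : ℝ} (hk : 0 < k) (hc : ∀ i, ContDiffAt ℝ 2 (c i) x)
    (hfeas : ∀ i, 0 ≤ c i x) (hcomp : ∀ i, lam i * c i x = 0) (u v : E) :
    fderiv ℝ (fderiv ℝ (fun y => k⁻¹ * ∑ i, lam i * log (k * c i y + 1))) x u v
      = ∑ i, lam i * fderiv ℝ (fderiv ℝ (c i)) x u v
        - k * ∑ i, lam i * (fderiv ℝ (c i) x u * fderiv ℝ (c i) x v) := by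
  have hpos : ∀ i, k * c i x + 1 ≠ 0 := fun i => by nlinarith [hfeas i]
  have hψ : ∀ i ∈ Finset.univ, ContDiffAt ℝ 2 (fun y => k⁻¹ * log (k * c i y + 1)) x :=
    fun i _ => by fun_prop (disch := exact hpos i)
  have hsum : (fun y => k⁻¹ * ∑ i, lam i * log (k * c i y + 1))
      = fun y => ∑ i, lam i * (k⁻¹ * log (k * c i y + 1)) := by
    funext y
    simp only [Finset.mul_sum, mul_left_comm]
  rw [hsum, fderiv_fderiv_sum_const_mul_apply hψ, Finset.mul_sum, ← Finset.sum_sub_distrib]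
  refine Finset.sum_congr rfl fun i _ => ?_
  rw [fderiv_fderiv_inv_mul_log_mul_add_one_apply hk.ne' (hc i) (hpos i)]
  rcases mul_eq_zero.mp (hcomp i) with h | h
  · simp [h]
  · simp only [h, mul_zero, zero_add, inv_one, one_pow, one_mul, mul_one]
    ring

end SecondDerivative

theorem EDF_hessian_at_KKT_general {n m : ℕ}
    (f : EuclideanSpace ℝ (Fin n) → ℝ)
    (c : Fin m → EuclideanSpace ℝ (Fin n) → ℝ)
    (hf : ContDiff ℝ 2 f) (hc : ∀ i, ContDiff ℝ 2 (c i))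
    (y xstar : EuclideanSpace ℝ (Fin n)) (lamstar : Fin m → ℝ)
    (hlt : f xstar < f y)
    (hfeas : ∀ i, 0 ≤ c i xstar)
    (hcomp : ∀ i, lamstar i * c i xstar = 0)
    (k : ℝ) (hk : 0 < k) :
    ∀ u v : EuclideanSpace ℝ (Fin n),
      (fderiv ℝ (fderiv ℝ (fun x => -Real.log (f y - f x)
          - k⁻¹ * ∑ i, lamstar i * Real.log (k * c i x + 1))) xstar) u v
        = ((f y - f xstar)⁻¹) ^ 2 * (⟪gradient f xstar, u⟫ * ⟪gradient f xstar, v⟫)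
          + (f y - f xstar)⁻¹ * (fderiv ℝ (fderiv ℝ f) xstar) u v
          - ∑ i, lamstar i * (fderiv ℝ (fderiv ℝ (c i)) xstar) u v
          + k * ∑ i, lamstar i *
              (⟪gradient (c i) xstar, u⟫ * ⟪gradient (c i) xstar, v⟫) ∧
      (fderiv ℝ (fderiv ℝ (fun x => -Real.log (f y - f x)
          - k⁻¹ * ∑ i, lamstar i * Real.log (k * c i x + 1))) xstar) u v
        = (fderiv ℝ (fderiv ℝ (fun x => -Real.log (f y - f x)
            - ∑ i, lamstar i * c i x)) xstar) u v
          + k * ∑ i, lamstar i *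
              (⟪gradient (c i) xstar, u⟫ * ⟪gradient (c i) xstar, v⟫) := by
  intro u v
  have hc₂ : ∀ i, ContDiffAt ℝ 2 (c i) xstar := fun i => (hc i).contDiffAt
  have hpos : ∀ i, k * c i xstar + 1 ≠ 0 := fun i => by nlinarith [hfeas i]
  have hF : ContDiffAt ℝ 2 (fun x => -log (f y - f x)) xstar := by
    have : f y - f xstar ≠ 0 := sub_ne_zero.mpr hlt.ne'
    fun_prop (disch := exact this)
  have hP : ContDiffAt ℝ 2 (fun x => k⁻¹ * ∑ i, lamstar i * log (k * c i x + 1)) xstar := by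
    fun_prop (disch := exact hpos _)
  have hL : ContDiffAt ℝ 2 (fun x => ∑ i, lamstar i * c i x) xstar := by fun_prop
  rw [fderiv_fderiv_sub_apply hF hP, fderiv_fderiv_sub_apply hF hL,
    fderiv_fderiv_modified_barrier_apply_of_complementary hk hc₂ hfeas hcomp,
    fderiv_fderiv_sum_const_mul_apply fun i _ => hc₂ i,
    fderiv_fderiv_neg_log_sub_apply hf.contDiffAt hlt]
  simp only [inner_gradient_left]
  constructor <;> ring

/-- At a KKT pair `(x*, λ*)` with `Δ = f y - f x*`, for every `k > 0` the Hessian in `x`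
of the EDF `𝓛_y(·,λ*,k)` at `x*` equals (as a bilinear form)
`Δ⁻² ∇f∇fᵀ + Δ⁻¹ ∇²f - ∑ λ*_i ∇²c_i + k ∑ λ*_i ∇c_i∇c_iᵀ`, i.e.
`∇²𝓛_y(x*,λ*,k) = ∇²L_y(x*,λ*) + k ∇c(x*)ᵀ Λ* ∇c(x*)`. -/
theorem EDF_hessian_at_KKT {n m : ℕ}
    (f : EuclideanSpace ℝ (Fin n) → ℝ)
    (c : Fin m → EuclideanSpace ℝ (Fin n) → ℝ)
    (hf : ContDiff ℝ 2 f) (hc : ∀ i, ContDiff ℝ 2 (c i))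
    (y xstar : EuclideanSpace ℝ (Fin n)) (lamstar : Fin m → ℝ)
    (hlt : f xstar < f y)
    (hfeas : ∀ i, 0 ≤ c i xstar)
    (hdual : ∀ i, 0 ≤ lamstar i)
    (hcomp : ∀ i, lamstar i * c i xstar = 0)
    (hstat : (f y - f xstar)⁻¹ • gradient f xstar
        = ∑ i, lamstar i • gradient (c i) xstar)
    (k : ℝ) (hk : 0 < k) :
    ∀ u v : EuclideanSpace ℝ (Fin n),
      (fderiv ℝ (fderiv ℝ (fun x => -Real.log (f y - f x)
          - k⁻¹ * ∑ i, lamstar i * Real.log (k * c i x + 1))) xstar) u v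
        = ((f y - f xstar)⁻¹) ^ 2 * (⟪gradient f xstar, u⟫ * ⟪gradient f xstar, v⟫)
          + (f y - f xstar)⁻¹ * (fderiv ℝ (fderiv ℝ f) xstar) u v
          - ∑ i, lamstar i * (fderiv ℝ (fderiv ℝ (c i)) xstar) u v
          + k * ∑ i, lamstar i *
              (⟪gradient (c i) xstar, u⟫ * ⟪gradient (c i) xstar, v⟫) ∧
      (fderiv ℝ (fderiv ℝ (fun x => -Real.log (f y - f x)
          - k⁻¹ * ∑ i, lamstar i * Real.log (k * c i x + 1))) xstar) u v
        = (fderiv ℝ (fderiv ℝ (fun x => -Real.log (f y - f x)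
            - ∑ i, lamstar i * c i x)) xstar) u v
          + k * ∑ i, lamstar i *
              (⟪gradient (c i) xstar, u⟫ * ⟪gradient (c i) xstar, v⟫) :=
  EDF_hessian_at_KKT_general f c hf hc y xstar lamstar hlt hfeas hcomp k hk
end

section
/- Let f, c_i : ℝⁿ → ℝ (i = 1,…,m) be twice differentiable, y ∈ ℝⁿ, and let (x*, λ*) be a KKT pair with f(x*) < f(y), active set I* = {1,…,r} (c_i(x*) = 0 and λ*_i > 0 for i ≤ r; c_i(x*) > 0 and λ*_i = 0 for i > r). Assume the second order sufficient optimality condition: there is μ > 0 with ⟨∇²_{xx}L_y(x*,λ*)u, u⟩ ≥ μ‖u‖² for all u with ⟨∇c_i(x*), u⟩ = 0, i = 1,…,r, and the gradients ∇c_1(x*),…,∇c_r(x*) are linearly independent. Then there exist k₀ > 0 and ρ with 0 < ρ < μ such that for every k ≥ k₀ and every u ∈ ℝⁿ, ⟨∇²_{xx}𝓛_y(x*,λ*,k)u, u⟩ ≥ ρ‖u‖², i.e. the EDF is strongly convex at x*. -/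
/-!
The EDF is the Lagrangian plus `∑ λᵢ ψₖ(cᵢ x)` with `ψₖ t = t - k⁻¹ log (k t + 1)`. Since
`ψₖ'(0) = 0` and `ψₖ''(0) = k`, complementary slackness gives
`∇²𝓛_y(x*, λ*, k) = ∇²L_y(x*, λ*) + k ∑ λ*ᵢ ∇cᵢ(x*) ∇cᵢ(x*)ᵀ`.
This is Debreu's situation: a quadratic form `B` with `B v v ≥ μ ‖v‖²` on the common kernel of
finitely many linear forms `⟪gᵢ, ·⟫` satisfies `B u u + k ∑ ⟪gᵢ, u⟫² ≥ μ/2 ‖u‖²` for large `k`.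
Indeed, write `u = v + w` with `w` in the span of the `gᵢ`, where `∑ ⟪gᵢ, w⟫²` is coercive by
finite dimensionality, and absorb the cross terms `B v w`, `B w v` by AM-GM.
-/

open Real RealInnerProductSpace Filter Topology

section Hessian

variable {E F : Type*} [NormedAddCommGroup E] [NormedSpace ℝ E] [NormedAddCommGroup F]
  [NormedSpace ℝ F] {x : E}

theorem fderiv_fderiv_add_apply {G H : E → F} (hG : ContDiffAt ℝ 2 G x) (hH : ContDiffAt ℝ 2 H x)
    (u v : E) :
    fderiv ℝ (fderiv ℝ fun z => G z + H z) x u v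
      = fderiv ℝ (fderiv ℝ G) x u v + fderiv ℝ (fderiv ℝ H) x u v := by
  have hD : fderiv ℝ (fun z => G z + H z) =ᶠ[𝓝 x] fun z => fderiv ℝ G z + fderiv ℝ H z := by
    filter_upwards [hG.eventually (by simp), hH.eventually (by simp)] with z hGz hHz
    exact fderiv_fun_add (hGz.differentiableAt two_ne_zero) (hHz.differentiableAt two_ne_zero)
  rw [hD.fderiv_eq, fderiv_fun_add ((hG.fderiv_right (m := 1) le_rfl).differentiableAt one_ne_zero)
    ((hH.fderiv_right (m := 1) le_rfl).differentiableAt one_ne_zero)]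
  rfl

theorem fderiv_fderiv_sum_apply {ι : Type*} {s : Finset ι} {G : ι → E → F}
    (hG : ∀ i ∈ s, ContDiffAt ℝ 2 (G i) x) (u v : E) :
    fderiv ℝ (fderiv ℝ fun z => ∑ i ∈ s, G i z) x u v
      = ∑ i ∈ s, fderiv ℝ (fderiv ℝ (G i)) x u v := by
  classical
  induction s using Finset.induction_on with
  | empty => simp
  | insert a s ha ih =>
    have hGs : ∀ i ∈ s, ContDiffAt ℝ 2 (G i) x := fun i hi => hG i (Finset.mem_insert_of_mem hi)
    simp only [Finset.sum_insert ha]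
    rw [fderiv_fderiv_add_apply (hG a (Finset.mem_insert_self a s)) (ContDiffAt.sum hGs), ih hGs]

theorem fderiv_fderiv_comp_apply_s7 {ψ ψ' : ℝ → ℝ} {ψ'' : ℝ} {h : E → ℝ}
    (hψ : ∀ᶠ t in 𝓝 (h x), HasDerivAt ψ (ψ' t) t) (hψ' : HasDerivAt ψ' ψ'' (h x))
    (hh : ContDiffAt ℝ 2 h x) (u v : E) :
    fderiv ℝ (fderiv ℝ (ψ ∘ h)) x u v
      = ψ'' * (fderiv ℝ h x u * fderiv ℝ h x v) + ψ' (h x) * fderiv ℝ (fderiv ℝ h) x u v := by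
  have hD : fderiv ℝ (ψ ∘ h) =ᶠ[𝓝 x] fun z => ψ' (h z) • fderiv ℝ h z := by
    filter_upwards [hh.continuousAt.eventually hψ, hh.eventually (by simp)] with z hψz hhz
    exact (hψz.comp_hasFDerivAt z (hhz.differentiableAt two_ne_zero).hasFDerivAt).fderiv
  have hD' : HasFDerivAt (fun z => ψ' (h z) • fderiv ℝ h z) _ x :=
    (hψ'.comp_hasFDerivAt x (hh.differentiableAt two_ne_zero).hasFDerivAt).smul
      ((hh.fderiv_right (m := 1) le_rfl).differentiableAt one_ne_zero).hasFDerivAt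
  rw [hD.fderiv_eq, hD'.fderiv]
  simp only [add_apply, smul_apply, ContinuousLinearMap.smulRight_apply, smul_eq_mul,
    Function.comp_apply]
  ring

end Hessian

-- `𝓛_y(x, λ, k) = L_y(x, λ) + ∑ λᵢ * edfPenalty k (cᵢ x)`
noncomputable def edfPenalty (k t : ℝ) : ℝ := t - k⁻¹ * log (k * t + 1)

section EdfPenalty

variable {k t : ℝ}

theorem contDiffAt_edfPenalty (ht : 0 < k * t + 1) : ContDiffAt ℝ 2 (edfPenalty k) t :=
  contDiffAt_id.sub (contDiffAt_const.mul
    ((contDiffAt_const.mul contDiffAt_id).add contDiffAt_const |>.log ht.ne'))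

theorem hasDerivAt_edfPenalty (hk : k ≠ 0) (ht : 0 < k * t + 1) :
    HasDerivAt (edfPenalty k) (1 - (k * t + 1)⁻¹) t := by
  have hlin : HasDerivAt (fun s => k * s + 1) k t := by
    simpa using ((hasDerivAt_id t).const_mul k).add_const 1
  exact ((hasDerivAt_id t).sub ((hlin.log ht.ne').const_mul k⁻¹)).congr_deriv (by field_simp)

theorem hasDerivAt_one_sub_inv_mul_add_one (ht : k * t + 1 ≠ 0) :
    HasDerivAt (fun s => 1 - (k * s + 1)⁻¹) (k / (k * t + 1) ^ 2) t := by
  have hlin : HasDerivAt (fun s => k * s + 1) k t := by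
    simpa using ((hasDerivAt_id t).const_mul k).add_const 1
  exact ((hlin.inv ht).const_sub 1).congr_deriv (by ring)

end EdfPenalty

section EdfHessian

variable {E : Type*} [NormedAddCommGroup E] [NormedSpace ℝ E] {x : E}

theorem contDiffAt_mul_edfPenalty_comp {h : E → ℝ} {k a : ℝ} (hk : 0 < k)
    (hh : ContDiffAt ℝ 2 h x) (hx : 0 ≤ h x) :
    ContDiffAt ℝ 2 (fun z => a * edfPenalty k (h z)) x :=
  contDiffAt_const.mul ((contDiffAt_edfPenalty (by positivity)).comp x hh)

theorem fderiv_fderiv_mul_edfPenalty_comp_apply {h : E → ℝ} {k a : ℝ} (hk : 0 < k)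
    (hh : ContDiffAt ℝ 2 h x) (hx : 0 ≤ h x) (hslack : a * h x = 0) (u v : E) :
    fderiv ℝ (fderiv ℝ fun z => a * edfPenalty k (h z)) x u v
      = k * a * (fderiv ℝ h x u * fderiv ℝ h x v) := by
  have hpos : 0 < k * h x + 1 := by positivity
  have hψ : ∀ᶠ t in 𝓝 (h x),
      HasDerivAt (fun s => a * edfPenalty k s) (a * (1 - (k * t + 1)⁻¹)) t :=
    (continuousAt_const.eventually_lt (g := fun s => k * s + 1) (by fun_prop) hpos).mono
      fun t ht => (hasDerivAt_edfPenalty hk.ne' ht).const_mul a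
  have hψ' := (hasDerivAt_one_sub_inv_mul_add_one hpos.ne').const_mul a
  change fderiv ℝ (fderiv ℝ ((fun s => a * edfPenalty k s) ∘ h)) x u v = _
  rw [fderiv_fderiv_comp_apply_s7 hψ hψ' hh u v]
  rcases mul_eq_zero.1 hslack with ha | hx0
  · simp [ha]
  · simp only [hx0, mul_zero, zero_add, one_pow, div_one, inv_one, sub_self, zero_mul]
    ring

theorem fderiv_fderiv_edf_apply {ι : Type*} [Fintype ι] {F : E → ℝ} {c : ι → E → ℝ}
    {lam : ι → ℝ} {k : ℝ} (hk : 0 < k) (hF : ContDiffAt ℝ 2 F x)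
    (hc : ∀ i, ContDiffAt ℝ 2 (c i) x) (hc_nonneg : ∀ i, 0 ≤ c i x)
    (hslack : ∀ i, lam i * c i x = 0) (u v : E) :
    fderiv ℝ (fderiv ℝ fun z => F z - k⁻¹ * ∑ i, lam i * log (k * c i z + 1)) x u v
      = fderiv ℝ (fderiv ℝ fun z => F z - ∑ i, lam i * c i z) x u v
        + k * ∑ i, lam i * (fderiv ℝ (c i) x u * fderiv ℝ (c i) x v) := by
  have hsplit : (fun z => F z - k⁻¹ * ∑ i, lam i * log (k * c i z + 1))
      = fun z => (F z - ∑ i, lam i * c i z) + ∑ i, lam i * edfPenalty k (c i z) := by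
    funext z
    simp only [edfPenalty, mul_sub, Finset.sum_sub_distrib, Finset.mul_sum, mul_left_comm]
    ring
  have hL : ContDiffAt ℝ 2 (fun z => F z - ∑ i, lam i * c i z) x :=
    hF.sub (ContDiffAt.sum fun i _ => contDiffAt_const.mul (hc i))
  have hP : ∀ i ∈ Finset.univ, ContDiffAt ℝ 2 (fun z => lam i * edfPenalty k (c i z)) x :=
    fun i _ => contDiffAt_mul_edfPenalty_comp hk (hc i) (hc_nonneg i)
  rw [hsplit, fderiv_fderiv_add_apply hL (ContDiffAt.sum hP), fderiv_fderiv_sum_apply hP,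
    Finset.mul_sum]
  congr 1
  refine Finset.sum_congr rfl fun i _ => ?_
  rw [fderiv_fderiv_mul_edfPenalty_comp_apply hk (hc i) (hc_nonneg i) (hslack i)]
  ring

end EdfHessian

section Debreu

variable {E ι : Type*} [NormedAddCommGroup E] [InnerProductSpace ℝ E] [Fintype ι] (g : ι → E)

theorem exists_pos_mul_norm_sq_le_sum_inner_sq :
    ∃ α > 0, ∀ w ∈ Submodule.span ℝ (Set.range g), α * ‖w‖ ^ 2 ≤ ∑ i, ⟪g i, w⟫ ^ 2 := by
  set W := Submodule.span ℝ (Set.range g)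
  have : FiniteDimensional ℝ W := FiniteDimensional.span_of_finite ℝ (Set.finite_range g)
  let T : W →ₗ[ℝ] EuclideanSpace ℝ ι := (WithLp.linearEquiv 2 ℝ (ι → ℝ)).symm.toLinearMap ∘ₗ
    LinearMap.pi fun i => innerₛₗ ℝ (g i) ∘ₗ W.subtype
  have hT : ∀ w : W, ‖T w‖ ^ 2 = ∑ i, ⟪g i, w⟫ ^ 2 := fun w => EuclideanSpace.real_norm_sq_eq _
  have hker : LinearMap.ker T = ⊥ := by
    refine (Submodule.eq_bot_iff _).2 fun w hw => ?_
    have hg : ∀ i, ⟪g i, w⟫ = 0 := fun i => congrArg (fun z : EuclideanSpace ℝ ι => z i) hw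
    have hWw : W ≤ (ℝ ∙ (w : E))ᗮ := Submodule.span_le.2 <| Set.range_subset_iff.2 fun i =>
      Submodule.mem_orthogonal_singleton_iff_inner_right.2 (by rw [real_inner_comm]; exact hg i)
    exact Subtype.ext <| inner_self_eq_zero.1 <|
      Submodule.mem_orthogonal_singleton_iff_inner_right.1 (hWw w.2)
  obtain ⟨K, hK, hKT⟩ := T.exists_antilipschitzWith hker
  refine ⟨((K : ℝ) ^ 2)⁻¹, by positivity, fun w hw => ?_⟩
  have hle : ‖w‖ ≤ K * ‖T ⟨w, hw⟩‖ := hKT.le_mul_norm (map_zero T) ⟨w, hw⟩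
  rw [← hT ⟨w, hw⟩, inv_mul_le_iff₀ (by positivity), ← mul_pow]
  exact pow_le_pow_left₀ (norm_nonneg w) hle 2

theorem exists_forall_half_mul_norm_sq_le_add_mul_sum_inner_sq (B : E →L[ℝ] E →L[ℝ] ℝ)
    {μ : ℝ} (hμ : 0 < μ) (hB : ∀ v, (∀ i, ⟪g i, v⟫ = 0) → μ * ‖v‖ ^ 2 ≤ B v v) :
    ∃ k₀ > 0, ∀ k ≥ k₀, ∀ u, μ / 2 * ‖u‖ ^ 2 ≤ B u u + k * ∑ i, ⟪g i, u⟫ ^ 2 := by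
  obtain ⟨α, hα, hαW⟩ := exists_pos_mul_norm_sq_le_sum_inner_sq g
  set C := ‖B‖
  refine ⟨(C + μ / 2 + 2 * C ^ 2 / μ) / α, by positivity, fun k hk u => ?_⟩
  set W := Submodule.span ℝ (Set.range g)
  have : FiniteDimensional ℝ W := FiniteDimensional.span_of_finite ℝ (Set.finite_range g)
  set w := W.starProjection u
  set v := u - w
  have hw : w ∈ W := W.starProjection_apply_mem u
  have hvW : v ∈ Wᗮ := W.sub_starProjection_mem_orthogonal u
  have hv : ∀ i, ⟪g i, v⟫ = 0 := fun i =>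
    Submodule.inner_right_of_mem_orthogonal (Submodule.subset_span (Set.mem_range_self i)) hvW
  have hu : u = v + w := (sub_add_cancel u w).symm
  have hnorm : ‖u‖ ^ 2 = ‖v‖ ^ 2 + ‖w‖ ^ 2 := by
    rw [hu, norm_add_sq_real, real_inner_comm,
      Submodule.inner_right_of_mem_orthogonal hw hvW, mul_zero, add_zero]
  have hsum : ∑ i, ⟪g i, u⟫ ^ 2 = ∑ i, ⟪g i, w⟫ ^ 2 := by
    simp only [hu, inner_add_right, hv, zero_add]
  have hBuu : B u u = B v v + B v w + B w v + B w w := by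
    rw [hu]; simp only [map_add, add_apply]; ring
  have hbound : ∀ a b, |B a b| ≤ C * ‖a‖ * ‖b‖ := fun a b => B.le_opNorm₂ a b
  have hkα : C + μ / 2 + 2 * C ^ 2 / μ ≤ k * α := (div_le_iff₀ hα).1 hk
  have hk0 : 0 ≤ k := le_trans (by positivity) hk
  have hamgm : 2 * C * ‖v‖ * ‖w‖ ≤ μ / 2 * ‖v‖ ^ 2 + 2 * C ^ 2 / μ * ‖w‖ ^ 2 := by
    have := sq_nonneg (μ * ‖v‖ - 2 * C * ‖w‖)
    field_simp
    nlinarith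
  have hpen : (C + μ / 2 + 2 * C ^ 2 / μ) * ‖w‖ ^ 2 ≤ k * ∑ i, ⟪g i, u⟫ ^ 2 := by
    rw [hsum]
    calc _ ≤ k * α * ‖w‖ ^ 2 := by gcongr
      _ ≤ k * ∑ i, ⟪g i, w⟫ ^ 2 := by
        rw [mul_assoc]; exact mul_le_mul_of_nonneg_left (hαW w hw) hk0
  have hvw := (abs_le.1 (hbound v w)).1
  have hwv := (abs_le.1 (hbound w v)).1
  have hww := (abs_le.1 (hbound w w)).1
  rw [hnorm, hBuu]
  linarith [hB v hv]

end Debreu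

theorem EDF_strongly_convex_at_solution_general {n m r : ℕ}
    (f : EuclideanSpace ℝ (Fin n) → ℝ)
    (c : Fin m → EuclideanSpace ℝ (Fin n) → ℝ)
    (hf : ContDiff ℝ 2 f) (hc : ∀ i, ContDiff ℝ 2 (c i))
    (y xstar : EuclideanSpace ℝ (Fin n)) (lamstar : Fin m → ℝ)
    (hlt : f xstar < f y)
    (hact : ∀ i : Fin m, (i : ℕ) < r → c i xstar = 0 ∧ 0 < lamstar i)
    (hinact : ∀ i : Fin m, r ≤ (i : ℕ) → 0 < c i xstar ∧ lamstar i = 0)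
    (μ : ℝ) (hμ : 0 < μ)
    (hsosc : ∀ u : EuclideanSpace ℝ (Fin n),
      (∀ i : Fin m, (i : ℕ) < r → ⟪gradient (c i) xstar, u⟫ = 0) →
      (fderiv ℝ (fderiv ℝ (fun x => -Real.log (f y - f x)
          - ∑ i, lamstar i * c i x)) xstar) u u ≥ μ * ‖u‖ ^ 2) :
    ∃ k₀ : ℝ, 0 < k₀ ∧ ∃ ρ : ℝ, 0 < ρ ∧ ρ < μ ∧
      ∀ k : ℝ, k₀ ≤ k → ∀ u : EuclideanSpace ℝ (Fin n),
        (fderiv ℝ (fderiv ℝ (fun x => -Real.log (f y - f x)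
            - k⁻¹ * ∑ i, lamstar i * Real.log (k * c i x + 1))) xstar) u u
          ≥ ρ * ‖u‖ ^ 2 := by
  have hKKT : ∀ i, 0 ≤ lamstar i ∧ 0 ≤ c i xstar ∧ lamstar i * c i xstar = 0 := fun i => by
    rcases lt_or_ge (i : ℕ) r with hi | hi
    · obtain ⟨hc0, hlam⟩ := hact i hi
      exact ⟨hlam.le, hc0.ge, by rw [hc0, mul_zero]⟩
    · obtain ⟨hc0, hlam⟩ := hinact i hi
      exact ⟨hlam.ge, hc0.le, by rw [hlam, zero_mul]⟩
  have hF : ContDiffAt ℝ 2 (fun x => -log (f y - f x)) xstar :=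
    ((contDiffAt_const.sub hf.contDiffAt).log (sub_pos.2 hlt).ne').neg
  -- Scaling `∇cᵢ` by `√λᵢ` turns the weighted penalty into an unweighted sum of squares.
  obtain ⟨k₀, hk₀, hk₀B⟩ := exists_forall_half_mul_norm_sq_le_add_mul_sum_inner_sq
    (fun i => √(lamstar i) • gradient (c i) xstar) _ hμ fun v hv => hsosc v fun i hi => by
      simpa [inner_smul_left, (sqrt_pos.2 (hact i hi).2).ne'] using hv i
  refine ⟨k₀, hk₀, μ / 2, by positivity, by linarith, fun k hk u => ?_⟩
  rw [fderiv_fderiv_edf_apply (hk₀.trans_le hk) hF (fun i => (hc i).contDiffAt)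
    (fun i => (hKKT i).2.1) (fun i => (hKKT i).2.2)]
  convert hk₀B k hk u using 3
  refine Finset.sum_congr rfl fun i _ => ?_
  rw [real_inner_smul_left, mul_pow, sq_sqrt (hKKT i).1, inner_gradient_left, sq]

/-- Under the second order sufficient optimality condition at a KKT pair `(x*, λ*)` with
active set `{1,…,r}`, there exist `k₀ > 0` and `0 < ρ < μ` such that for every `k ≥ k₀`
the Hessian of the EDF `𝓛_y(·,λ*,k)` at `x*` satisfies
`⟨∇²𝓛 u, u⟩ ≥ ρ ‖u‖²` for all `u`, i.e. the EDF is strongly convex at `x*`. -/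
theorem EDF_strongly_convex_at_solution {n m r : ℕ} (hrm : r ≤ m)
    (f : EuclideanSpace ℝ (Fin n) → ℝ)
    (c : Fin m → EuclideanSpace ℝ (Fin n) → ℝ)
    (hf : ContDiff ℝ 2 f) (hc : ∀ i, ContDiff ℝ 2 (c i))
    (y xstar : EuclideanSpace ℝ (Fin n)) (lamstar : Fin m → ℝ)
    (hlt : f xstar < f y)
    (hact : ∀ i : Fin m, (i : ℕ) < r → c i xstar = 0 ∧ 0 < lamstar i)
    (hinact : ∀ i : Fin m, r ≤ (i : ℕ) → 0 < c i xstar ∧ lamstar i = 0)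
    (hstat : gradient (fun x => -Real.log (f y - f x)
        - ∑ i, lamstar i * c i x) xstar = 0)
    (μ : ℝ) (hμ : 0 < μ)
    (hsosc : ∀ u : EuclideanSpace ℝ (Fin n),
      (∀ i : Fin m, (i : ℕ) < r → ⟪gradient (c i) xstar, u⟫ = 0) →
      (fderiv ℝ (fderiv ℝ (fun x => -Real.log (f y - f x)
          - ∑ i, lamstar i * c i x)) xstar) u u ≥ μ * ‖u‖ ^ 2)
    (hli : LinearIndependent ℝ
      (fun i : {i : Fin m // (i : ℕ) < r} => gradient (c i.1) xstar)) :
    ∃ k₀ : ℝ, 0 < k₀ ∧ ∃ ρ : ℝ, 0 < ρ ∧ ρ < μ ∧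
      ∀ k : ℝ, k₀ ≤ k → ∀ u : EuclideanSpace ℝ (Fin n),
        (fderiv ℝ (fderiv ℝ (fun x => -Real.log (f y - f x)
            - k⁻¹ * ∑ i, lamstar i * Real.log (k * c i x + 1))) xstar) u u
          ≥ ρ * ‖u‖ ^ 2 :=
  EDF_strongly_convex_at_solution_general f c hf hc y xstar lamstar hlt hact hinact μ hμ hsosc
end

section
/- Let f : ℝⁿ → ℝ be convex, c_i : ℝⁿ → ℝ concave (i = 1,…,m), all differentiable, let y satisfy c_i(y) > 0 for all i, and let (x*, λ*) be a KKT pair with f(x*) < f(y). Then for every k > 0, x* is a global minimizer of x ↦ 𝓛_y(x,λ*,k) over the set {x : f(x) < f(y), c_i(x) > −1/k for all i}, and the minimal value equals 𝓛_y(x*,λ*,k) = −ln(f(y) − f(x*)); equivalently, f(x*) = f(y) − exp(−𝓛_y(x*,λ*,k)). -/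
open Real

/-! Complementary slackness makes the penalty term vanish at `x*`. For a feasible `x`,
`k⁻¹ ln (k c + 1) ≤ c`, concavity of the `c i` with complementary slackness and stationarity
bound `∑ λ*ᵢ cᵢ(x)` by the first-order term `⟪∇f(x*), x - x*⟫ / (f y - f x*)`, convexity of `f`
bounds that by `(f x - f x*) / (f y - f x*)`, and `1 - t⁻¹ ≤ ln t` turns this into
`ln (f y - f x*) - ln (f y - f x)`. -/

section FirstOrder

variable {E : Type*} [NormedAddCommGroup E] [NormedSpace ℝ E] {f : E → ℝ} {a : E}

theorem ConvexOn.fderiv_apply_sub_le (hf : ConvexOn ℝ Set.univ f)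
    (hd : DifferentiableAt ℝ f a) (b : E) : fderiv ℝ f a (b - a) ≤ f b - f a := by
  have hline : ConvexOn ℝ Set.univ (f ∘ AffineMap.lineMap (k := ℝ) a b) := by
    simpa using hf.comp_affineMap (AffineMap.lineMap a b)
  have hderiv : HasDerivAt (f ∘ AffineMap.lineMap (k := ℝ) a b) (fderiv ℝ f a (b - a)) 0 := by
    have hd' : DifferentiableAt ℝ f (AffineMap.lineMap a b (0 : ℝ)) := by simpa using hd
    simpa using hd'.hasFDerivAt.comp_hasDerivAt 0 AffineMap.hasDerivAt_lineMap
  simpa [slope_def_field] using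
    hline.le_slope_of_hasDerivAt (Set.mem_univ 0) (Set.mem_univ 1) one_pos hderiv

theorem ConcaveOn.sub_le_fderiv_apply (hf : ConcaveOn ℝ Set.univ f)
    (hd : DifferentiableAt ℝ f a) (b : E) : f b - f a ≤ fderiv ℝ f a (b - a) := by
  have := hf.neg.fderiv_apply_sub_le hd.neg b
  rw [fderiv_neg, neg_apply, Pi.neg_apply, Pi.neg_apply] at this
  linarith

end FirstOrder

theorem sum_mul_le_mul_sub_of_stationary {E ι : Type*} [NormedAddCommGroup E]
    [InnerProductSpace ℝ E] [CompleteSpace E] [Fintype ι] {f : E → ℝ} {c : ι → E → ℝ}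
    {xstar : E} {lam : ι → ℝ} {μ : ℝ}
    (hf : ConvexOn ℝ Set.univ f) (hc : ∀ i, ConcaveOn ℝ Set.univ (c i))
    (hfd : DifferentiableAt ℝ f xstar) (hcd : ∀ i, DifferentiableAt ℝ (c i) xstar)
    (hμ : 0 ≤ μ) (hlam : ∀ i, 0 ≤ lam i) (hcomp : ∀ i, lam i * c i xstar = 0)
    (hstat : μ • gradient f xstar - ∑ i, lam i • gradient (c i) xstar = 0) (x : E) :
    ∑ i, lam i * c i x ≤ μ * (f x - f xstar) := by
  have hstat' : ∑ i, lam i • gradient (c i) xstar = μ • gradient f xstar :=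
    (sub_eq_zero.mp hstat).symm
  calc ∑ i, lam i * c i x = ∑ i, lam i * (c i x - c i xstar) := by
        simp only [mul_sub, hcomp, sub_zero]
    _ ≤ ∑ i, lam i * fderiv ℝ (c i) xstar (x - xstar) :=
        Finset.sum_le_sum fun i _ =>
          mul_le_mul_of_nonneg_left ((hc i).sub_le_fderiv_apply (hcd i) x) (hlam i)
    _ = inner ℝ (∑ i, lam i • gradient (c i) xstar) (x - xstar) := by
        simp only [sum_inner, real_inner_smul_left, inner_gradient_left]
    _ = μ * fderiv ℝ f xstar (x - xstar) := by
        rw [hstat', real_inner_smul_left, inner_gradient_left]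
    _ ≤ μ * (f x - f xstar) :=
        mul_le_mul_of_nonneg_left (hf.fderiv_apply_sub_le hfd x) hμ

theorem inv_mul_log_mul_add_one_le {k t : ℝ} (hk : 0 < k) (ht : -1 / k < t) :
    k⁻¹ * log (k * t + 1) ≤ t := by
  have hpos : 0 < k * t + 1 := by
    rw [div_lt_iff₀ hk] at ht
    linarith
  have hlog : log (k * t + 1) ≤ k * t := by linarith [log_le_sub_one_of_pos hpos]
  calc k⁻¹ * log (k * t + 1) ≤ k⁻¹ * (k * t) :=
        mul_le_mul_of_nonneg_left hlog (inv_pos.mpr hk).le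
    _ = t := by field_simp

theorem one_sub_div_le_log_sub_log {a b : ℝ} (ha : 0 < a) (hb : 0 < b) :
    1 - a / b ≤ log b - log a := by
  have := one_sub_inv_le_log_of_pos (div_pos hb ha)
  rwa [inv_div, log_div hb.ne' ha.ne'] at this

theorem EDF_exact_smooth_approximation_general {n m : ℕ}
    (f : EuclideanSpace ℝ (Fin n) → ℝ)
    (c : Fin m → EuclideanSpace ℝ (Fin n) → ℝ)
    (hf : ConvexOn ℝ Set.univ f) (hc : ∀ i, ConcaveOn ℝ Set.univ (c i))
    (hfd : Differentiable ℝ f) (hcd : ∀ i, Differentiable ℝ (c i))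
    (y : EuclideanSpace ℝ (Fin n))
    (xstar : EuclideanSpace ℝ (Fin n)) (lamstar : Fin m → ℝ)
    (hlt : f xstar < f y)
    (hdual : ∀ i, 0 ≤ lamstar i)
    (hcomp : ∀ i, lamstar i * c i xstar = 0)
    (hstat : (f y - f xstar)⁻¹ • gradient f xstar
        - ∑ i, lamstar i • gradient (c i) xstar = 0)
    (k : ℝ) (hk : 0 < k) :
    (∀ x : EuclideanSpace ℝ (Fin n), f x < f y → (∀ i, -1 / k < c i x) →
      (-Real.log (f y - f xstar)
          - k⁻¹ * ∑ i, lamstar i * Real.log (k * c i xstar + 1))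
        ≤ -Real.log (f y - f x)
          - k⁻¹ * ∑ i, lamstar i * Real.log (k * c i x + 1)) ∧
    (-Real.log (f y - f xstar)
        - k⁻¹ * ∑ i, lamstar i * Real.log (k * c i xstar + 1))
      = -Real.log (f y - f xstar) ∧
    f xstar = f y - Real.exp (-(-Real.log (f y - f xstar)
        - k⁻¹ * ∑ i, lamstar i * Real.log (k * c i xstar + 1))) := by
  have hgap : 0 < f y - f xstar := sub_pos.mpr hlt
  have hpenalty : ∑ i, lamstar i * log (k * c i xstar + 1) = 0 :=
    Finset.sum_eq_zero fun i _ => by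
      rcases mul_eq_zero.mp (hcomp i) with h | h <;> simp [h]
  rw [hpenalty, mul_zero, sub_zero, neg_neg, exp_log hgap, sub_sub_cancel]
  refine ⟨fun x hx hcx => ?_, rfl, rfl⟩
  have hkkt := sum_mul_le_mul_sub_of_stationary hf hc (hfd xstar) (fun i => hcd i xstar)
    (inv_pos.mpr hgap).le hdual hcomp hstat x
  have hedf : k⁻¹ * ∑ i, lamstar i * log (k * c i x + 1) ≤ ∑ i, lamstar i * c i x := by
    rw [Finset.mul_sum]
    refine Finset.sum_le_sum fun i _ => ?_
    rw [mul_left_comm]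
    exact mul_le_mul_of_nonneg_left (inv_mul_log_mul_add_one_le hk (hcx i)) (hdual i)
  have hlog := one_sub_div_le_log_sub_log (sub_pos.mpr hx) hgap
  have hratio : (f y - f xstar)⁻¹ * (f x - f xstar) = 1 - (f y - f x) / (f y - f xstar) := by
    field_simp
    ring
  linarith

/-- For a KKT pair `(x*, λ*)` and any `k > 0`, `x*` is a global minimizer of the EDF
`𝓛_y(·,λ*,k)` over `{x : f x < f y, c i x > -1/k ∀ i}`, the minimal value equals
`-ln (f y - f x*)`, and equivalently `f x* = f y - exp (-𝓛_y(x*,λ*,k))`. -/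
theorem EDF_exact_smooth_approximation {n m : ℕ}
    (f : EuclideanSpace ℝ (Fin n) → ℝ)
    (c : Fin m → EuclideanSpace ℝ (Fin n) → ℝ)
    (hf : ConvexOn ℝ Set.univ f) (hc : ∀ i, ConcaveOn ℝ Set.univ (c i))
    (hfd : Differentiable ℝ f) (hcd : ∀ i, Differentiable ℝ (c i))
    (y : EuclideanSpace ℝ (Fin n)) (hy : ∀ i, 0 < c i y)
    (xstar : EuclideanSpace ℝ (Fin n)) (lamstar : Fin m → ℝ)
    (hlt : f xstar < f y)
    (hfeas : ∀ i, 0 ≤ c i xstar)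
    (hdual : ∀ i, 0 ≤ lamstar i)
    (hcomp : ∀ i, lamstar i * c i xstar = 0)
    (hstat : (f y - f xstar)⁻¹ • gradient f xstar
        - ∑ i, lamstar i • gradient (c i) xstar = 0)
    (k : ℝ) (hk : 0 < k) :
    (∀ x : EuclideanSpace ℝ (Fin n), f x < f y → (∀ i, -1 / k < c i x) →
      (-Real.log (f y - f xstar)
          - k⁻¹ * ∑ i, lamstar i * Real.log (k * c i xstar + 1))
        ≤ -Real.log (f y - f x)
          - k⁻¹ * ∑ i, lamstar i * Real.log (k * c i x + 1)) ∧
    (-Real.log (f y - f xstar)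
        - k⁻¹ * ∑ i, lamstar i * Real.log (k * c i xstar + 1))
      = -Real.log (f y - f xstar) ∧
    f xstar = f y - Real.exp (-(-Real.log (f y - f xstar)
        - k⁻¹ * ∑ i, lamstar i * Real.log (k * c i xstar + 1))) :=
  EDF_exact_smooth_approximation_general f c hf hc hfd hcd y xstar lamstar hlt hdual hcomp hstat k
    hk
end

section
/- Let f : ℝⁿ → ℝ be convex and continuously differentiable, c_i : ℝⁿ → ℝ concave and continuously differentiable (i = 1,…,m), assume the solution set X* of min{f(x) : c_i(x) ≥ 0 ∀i} is nonempty and bounded and the Slater condition holds. Let y satisfy c_i(y) > 0 for all i and f(y) > min_Ω f. Then for every k > 0 and every λ ∈ ℝ^m with all λ_i > 0, the EDF 𝓛_y(·,λ,k) attains its infimum over {x : f(x) < f(y), c_i(x) > −1/k ∀i} at some point x̂ satisfying ∇_x 𝓛_y(x̂,λ,k) = 0, f(x̂) < f(y) and k c_i(x̂) + 1 > 0 for all i; consequently the updated multipliers λ̂_i = λ_i (k c_i(x̂) + 1)⁻¹ are all positive, i.e. the exterior point method step is well defined. -/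
/-!
The constraint set `{f ≤ f y, c_i ≥ -1/k}` is closed and convex. If it were unbounded it would
contain a ray; along that ray `f` is convex and bounded above, hence nonincreasing, and each `c_i`
is concave and bounded below, hence nondecreasing. Started at a minimizer, the ray would then lie
in the bounded solution set `X*`. So the domain of the EDF is bounded, and `exp (-𝓛_y)`, extended
by `0` off the domain, is a continuous function on a compact set that is positive exactly on the
domain: its maximizer is an interior minimizer of `𝓛_y`.
-/

open Real Set Filter Topology Bornology

theorem ConvexOn.le_of_bddAbove_on_ray {E : Type*} [AddCommGroup E] [Module ℝ E] {f : E → ℝ}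
    (hf : ConvexOn ℝ univ f) {x d : E} {M : ℝ} (hM : ∀ t : ℝ, 0 ≤ t → f (x + t • d) ≤ M)
    {t : ℝ} (ht : 0 ≤ t) : f (x + t • d) ≤ f x := by
  have hbound : ∀ T, t ≤ T → 0 < T → f (x + t • d) ≤ (1 - t / T) * f x + t / T * M := by
    intro T hT hT₀
    have hst : 0 ≤ t / T := div_nonneg ht hT₀.le
    have hx : x + t • d = (1 - t / T) • x + (t / T) • (x + T • d) := by
      rw [smul_add, smul_smul, div_mul_cancel₀ t hT₀.ne']
      module
    calc f (x + t • d) = f ((1 - t / T) • x + (t / T) • (x + T • d)) := by rw [hx]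
      _ ≤ (1 - t / T) * f x + t / T * f (x + T • d) :=
        hf.2 trivial trivial (by rw [sub_nonneg]; exact div_le_one_of_le₀ hT hT₀.le) hst
          (by ring)
      _ ≤ (1 - t / T) * f x + t / T * M := by gcongr; exact hM T (ht.trans hT)
  have hlim : Tendsto (fun T => (1 - t / T) * f x + t / T * M) atTop (𝓝 (f x)) := by
    have h : Tendsto (fun T : ℝ => t / T) atTop (𝓝 0) := tendsto_const_nhds.div_atTop tendsto_id
    have hsum : Tendsto (fun T => (1 - t / T) * f x + t / T * M) atTop
        (𝓝 ((1 - 0) * f x + 0 * M)) :=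
      ((tendsto_const_nhds.sub h).mul tendsto_const_nhds).add (h.mul tendsto_const_nhds)
    simpa using hsum
  refine ge_of_tendsto hlim ?_
  filter_upwards [eventually_ge_atTop (max t 1)] with T hT
  exact hbound T (le_of_max_le_left hT) (by linarith [le_max_right t 1])

theorem ConcaveOn.ge_of_bddBelow_on_ray {E : Type*} [AddCommGroup E] [Module ℝ E] {f : E → ℝ}
    (hf : ConcaveOn ℝ univ f) {x d : E} {M : ℝ} (hM : ∀ t : ℝ, 0 ≤ t → M ≤ f (x + t • d))
    {t : ℝ} (ht : 0 ≤ t) : f x ≤ f (x + t • d) := by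
  have h := hf.neg.le_of_bddAbove_on_ray (M := -M) (fun s hs => neg_le_neg (hM s hs)) ht
  simpa using h

theorem Convex.exists_ray_subset_of_not_isBounded {E : Type*} [NormedAddCommGroup E]
    [NormedSpace ℝ E] [ProperSpace E] {K : Set E} (hK : Convex ℝ K) (hKc : IsClosed K)
    (hKb : ¬IsBounded K) {x : E} (hx : x ∈ K) :
    ∃ d : E, ‖d‖ = 1 ∧ ∀ t : ℝ, 0 ≤ t → x + t • d ∈ K := by
  have hfar : ∀ j : ℕ, ∃ u ∈ K, (j : ℝ) < ‖u - x‖ := by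
    intro j
    by_contra! h
    exact hKb ((Metric.isBounded_closedBall (x := x) (r := j)).subset fun u hu => by
      simpa [dist_eq_norm] using h u hu)
  choose u huK hu using hfar
  have hr : Tendsto (fun j => ‖u j - x‖) atTop atTop :=
    tendsto_atTop_mono (fun j => (hu j).le) tendsto_natCast_atTop_atTop
  have hpos : ∀ j, 0 < ‖u j - x‖ := fun j => (Nat.cast_nonneg j).trans_lt (hu j)
  obtain ⟨d, hd, φ, hφ, hlim⟩ := (isCompact_sphere (0 : E) 1).tendsto_subseq
    (x := fun j => ‖u j - x‖⁻¹ • (u j - x)) fun j => by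
      simp [norm_smul, (hpos j).ne']
  refine ⟨d, by simpa using hd, fun t ht => hKc.mem_of_tendsto
    (tendsto_const_nhds.add (hlim.const_smul t)) ?_⟩
  filter_upwards [(hr.comp hφ.tendsto_atTop).eventually_ge_atTop t] with j hj
  have hs : t * ‖u (φ j) - x‖⁻¹ ∈ Icc (0 : ℝ) 1 :=
    ⟨by positivity, by rw [← div_eq_mul_inv]; exact div_le_one_of_le₀ hj (norm_nonneg _)⟩
  simpa [smul_smul] using hK.add_smul_sub_mem hx (huK (φ j)) hs

theorem isBounded_sublevel_of_isBounded_argmin {E ι : Type*} [NormedAddCommGroup E]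
    [NormedSpace ℝ E] [ProperSpace E] {f : E → ℝ} {c : ι → E → ℝ}
    (hf : ConvexOn ℝ univ f) (hc : ∀ i, ConcaveOn ℝ univ (c i))
    (hfc : Continuous f) (hcc : ∀ i, Continuous (c i))
    (hbd : IsBounded {x | (∀ i, 0 ≤ c i x) ∧ ∀ z, (∀ i, 0 ≤ c i z) → f x ≤ f z})
    {xs : E} (hxs : xs ∈ {x | (∀ i, 0 ≤ c i x) ∧ ∀ z, (∀ i, 0 ≤ c i z) → f x ≤ f z})
    {α β : ℝ} (hα : f xs ≤ α) (hβ : β ≤ 0) :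
    IsBounded {x | f x ≤ α ∧ ∀ i, β ≤ c i x} := by
  have hK : {x | f x ≤ α ∧ ∀ i, β ≤ c i x} = {x | f x ≤ α} ∩ ⋂ i, {x | β ≤ c i x} := by
    ext; simp
  have hKconv : Convex ℝ {x | f x ≤ α ∧ ∀ i, β ≤ c i x} := by
    rw [hK]
    have hfα : Convex ℝ {x | f x ≤ α} := by simpa using hf.convex_le α
    exact hfα.inter (convex_iInter fun i => by simpa using (hc i).convex_ge β)
  have hKclosed : IsClosed {x | f x ≤ α ∧ ∀ i, β ≤ c i x} := by
    rw [hK]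
    exact (isClosed_le hfc continuous_const).inter
      (isClosed_iInter fun i => isClosed_le continuous_const (hcc i))
  by_contra hKb
  obtain ⟨d, hd, hray⟩ := hKconv.exists_ray_subset_of_not_isBounded hKclosed hKb
    (x := xs) ⟨hα, fun i => hβ.trans (hxs.1 i)⟩
  have hray_argmin : ∀ t : ℝ, 0 ≤ t →
      xs + t • d ∈ {x | (∀ i, 0 ≤ c i x) ∧ ∀ z, (∀ i, 0 ≤ c i z) → f x ≤ f z} :=
    fun t ht =>
      ⟨fun i => (hxs.1 i).trans ((hc i).ge_of_bddBelow_on_ray (fun s hs => (hray s hs).2 i) ht),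
        fun z hz => (hf.le_of_bddAbove_on_ray (fun s hs => (hray s hs).1) ht).trans (hxs.2 z hz)⟩
  obtain ⟨R, hR⟩ := hbd.subset_closedBall xs
  have hfar := hR (hray_argmin (|R| + 1) (by positivity))
  rw [Metric.mem_closedBall, dist_eq_norm, add_sub_cancel_left, norm_smul, hd, mul_one,
    Real.norm_of_nonneg (by positivity)] at hfar
  linarith [le_abs_self R]

theorem exists_isMaxOn_of_pos_of_nonpos_compl {X : Type*} [TopologicalSpace X] {S : Set X}
    {G : X → ℝ} (hS : IsCompact (closure S)) (hG : ContinuousOn G (closure S))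
    (hout : ∀ x ∉ S, G x ≤ 0) {x₀ : X} (hx₀ : x₀ ∈ S) (hG₀ : 0 < G x₀) :
    ∃ x ∈ S, IsMaxOn G S x := by
  obtain ⟨x, -, hmax⟩ := hS.exists_isMaxOn ⟨x₀, subset_closure hx₀⟩ hG
  have hGx : 0 < G x := hG₀.trans_le (hmax (subset_closure hx₀))
  exact ⟨x, by_contra fun h => (hout x h).not_gt hGx, hmax.on_subset subset_closure⟩

section EDF

variable {E ι : Type*}

def edfDomain (f : E → ℝ) (c : ι → E → ℝ) (y : E) (k : ℝ) : Set E :=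
  {x | f x < f y ∧ ∀ i, 0 < k * c i x + 1}

theorem edfDomain_subset {f : E → ℝ} {c : ι → E → ℝ} {y : E} {k : ℝ} (hk : 0 < k) :
    edfDomain f c y k ⊆ {x | f x ≤ f y ∧ ∀ i, -k⁻¹ ≤ c i x} := fun x hx =>
  ⟨hx.1.le, fun i => by
    rw [neg_le_iff_add_nonneg, ← mul_nonneg_iff_of_pos_left hk, mul_add, mul_inv_cancel₀ hk.ne']
    exact (hx.2 i).le⟩

theorem isOpen_edfDomain [TopologicalSpace E] [Finite ι] {f : E → ℝ} {c : ι → E → ℝ} {y : E}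
    {k : ℝ} (hfc : Continuous f) (hcc : ∀ i, Continuous (c i)) :
    IsOpen (edfDomain f c y k) := by
  have h : edfDomain f c y k = {x | f x < f y} ∩ ⋂ i, {x | 0 < k * c i x + 1} := by
    ext; simp [edfDomain]
  rw [h]
  exact (isOpen_lt hfc continuous_const).inter (isOpen_iInter_of_finite fun i =>
    isOpen_lt continuous_const ((continuous_const.mul (hcc i)).add continuous_const))

variable [Fintype ι]

noncomputable def edf (f : E → ℝ) (c : ι → E → ℝ) (y : E) (k : ℝ) (lam : ι → ℝ) (x : E) : ℝ :=
  -log (f y - f x) - k⁻¹ * ∑ i, lam i * log (k * c i x + 1)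

/-- `exp (-edf)` on `edfDomain`, extended by `0` to a continuous function on all of `E`. -/
noncomputable def edfWeight (f : E → ℝ) (c : ι → E → ℝ) (y : E) (k : ℝ) (lam : ι → ℝ)
    (x : E) : ℝ :=
  max (f y - f x) 0 * ∏ i, max (k * c i x + 1) 0 ^ (k⁻¹ * lam i)

variable {f : E → ℝ} {c : ι → E → ℝ} {y : E} {k : ℝ} {lam : ι → ℝ} {x : E}

theorem continuous_edfWeight [TopologicalSpace E] (hfc : Continuous f)
    (hcc : ∀ i, Continuous (c i)) (hk : 0 ≤ k) (hlam : ∀ i, 0 ≤ lam i) :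
    Continuous (edfWeight f c y k lam) := by
  refine ((continuous_const.sub hfc).max continuous_const).mul
    (continuous_finsetProd _ fun i _ => continuous_iff_continuousAt.2 fun x => ?_)
  exact (((continuous_const.mul (hcc i)).add continuous_const).max
    continuous_const).continuousAt.rpow_const (Or.inr (by have := hlam i; positivity))

theorem edfWeight_pos (hx : x ∈ edfDomain f c y k) : 0 < edfWeight f c y k lam x :=
  mul_pos (lt_max_of_lt_left (sub_pos.2 hx.1))
    (Finset.prod_pos fun i _ => rpow_pos_of_pos (lt_max_of_lt_left (hx.2 i)) _)

theorem edfWeight_eq_zero_of_notMem (hk : 0 < k) (hlam : ∀ i, 0 < lam i)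
    (hx : x ∉ edfDomain f c y k) : edfWeight f c y k lam x = 0 := by
  simp only [edfDomain, mem_ofPred_eq, not_and_or, not_forall, not_lt] at hx
  rcases hx with hf | ⟨i, hi⟩
  · rw [edfWeight, max_eq_right (sub_nonpos.2 hf), zero_mul]
  · rw [edfWeight, Finset.prod_eq_zero (Finset.mem_univ i), mul_zero]
    rw [max_eq_right hi, zero_rpow (mul_pos (inv_pos.2 hk) (hlam i)).ne']

theorem edf_eq_neg_log_edfWeight (hx : x ∈ edfDomain f c y k) :
    edf f c y k lam x = -log (edfWeight f c y k lam x) := by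
  have hfx := sub_pos.2 hx.1
  rw [edf, edfWeight, max_eq_left hfx.le, log_mul hfx.ne'
      (Finset.prod_pos fun i _ => rpow_pos_of_pos (lt_max_of_lt_left (hx.2 i)) _).ne',
    log_prod fun i _ => (rpow_pos_of_pos (lt_max_of_lt_left (hx.2 i)) _).ne', Finset.mul_sum]
  simp only [max_eq_left (hx.2 _).le, log_rpow (hx.2 _)]
  simp only [← mul_assoc]
  ring

theorem isMinOn_edf_of_isMaxOn_edfWeight
    (hmax : IsMaxOn (edfWeight f c y k lam) (edfDomain f c y k) x)
    (hx : x ∈ edfDomain f c y k) : IsMinOn (edf f c y k lam) (edfDomain f c y k) x :=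
  fun z hz => by
    rw [mem_ofPred_eq, edf_eq_neg_log_edfWeight hz, edf_eq_neg_log_edfWeight hx]
    exact neg_le_neg (log_le_log (edfWeight_pos hz) (hmax hz))

end EDF

theorem EPM_step_well_defined_general {n m : ℕ}
    (f : EuclideanSpace ℝ (Fin n) → ℝ)
    (c : Fin m → EuclideanSpace ℝ (Fin n) → ℝ)
    (hf : ConvexOn ℝ Set.univ f) (hc : ∀ i, ConcaveOn ℝ Set.univ (c i))
    (hfd : ContDiff ℝ 1 f) (hcd : ∀ i, ContDiff ℝ 1 (c i))
    (Ω : Set (EuclideanSpace ℝ (Fin n)))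
    (hΩ : Ω = {x | ∀ i, 0 ≤ c i x})
    (Xstar : Set (EuclideanSpace ℝ (Fin n)))
    (hXstar : Xstar = {x | x ∈ Ω ∧ ∀ z ∈ Ω, f x ≤ f z})
    (hne : Xstar.Nonempty) (hbd : Bornology.IsBounded Xstar)
    (y : EuclideanSpace ℝ (Fin n))
    (hfy : ∀ x ∈ Xstar, f x < f y)
    (k : ℝ) (hk : 0 < k)
    (lam : Fin m → ℝ) (hlam : ∀ i, 0 < lam i) :
    ∃ xhat : EuclideanSpace ℝ (Fin n),
      f xhat < f y ∧ (∀ i, 0 < k * c i xhat + 1) ∧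
      IsMinOn (fun x => -Real.log (f y - f x)
          - k⁻¹ * ∑ i, lam i * Real.log (k * c i x + 1))
        {x : EuclideanSpace ℝ (Fin n) | f x < f y ∧ ∀ i, 0 < k * c i x + 1} xhat ∧
      gradient (fun x => -Real.log (f y - f x)
          - k⁻¹ * ∑ i, lam i * Real.log (k * c i x + 1)) xhat = 0 ∧
      ∀ i, 0 < lam i * (k * c i xhat + 1)⁻¹ := by
  subst hΩ hXstar
  obtain ⟨xs, hxs⟩ := hne
  have hfc : Continuous f := hfd.continuous
  have hcc : ∀ i, Continuous (c i) := fun i => (hcd i).continuous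
  have hdom_bdd : IsBounded (edfDomain f c y k) :=
    (isBounded_sublevel_of_isBounded_argmin hf hc hfc hcc hbd hxs (hfy xs hxs).le
      (neg_nonpos.2 (inv_nonneg.2 hk.le))).subset (edfDomain_subset hk)
  have hxs_dom : xs ∈ edfDomain f c y k :=
    ⟨hfy xs hxs, fun i => add_pos_of_nonneg_of_pos (mul_nonneg hk.le (hxs.1 i)) one_pos⟩
  obtain ⟨xh, hxh, hmax⟩ := exists_isMaxOn_of_pos_of_nonpos_compl hdom_bdd.isCompact_closure
    (continuous_edfWeight hfc hcc hk.le fun i => (hlam i).le).continuousOn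
    (fun x hx => (edfWeight_eq_zero_of_notMem hk hlam hx).le) hxs_dom
    (edfWeight_pos (lam := lam) hxs_dom)
  have hmin := isMinOn_edf_of_isMaxOn_edfWeight hmax hxh
  refine ⟨xh, hxh.1, hxh.2, hmin, ?_, fun i => mul_pos (hlam i) (inv_pos.2 (hxh.2 i))⟩
  have hcrit := (hmin.isLocalMin ((isOpen_edfDomain hfc hcc).mem_nhds hxh)).fderiv_eq_zero
  exact (by rw [gradient, hcrit, map_zero] : gradient (edf f c y k lam) xh = 0)

/-- Well-definedness of the exterior point method step: under Assumptions A and B, for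
any interior "center" `y`, any `k > 0` and any positive vector of Lagrange multipliers
`λ`, the EDF `𝓛_y(·,λ,k)` attains its infimum over
`S = {x : f x < f y, k c_i x + 1 > 0 ∀ i}` at some `x̂` with `∇_x 𝓛_y(x̂,λ,k) = 0`,
and the updated multipliers `λ̂_i = λ_i (k c_i(x̂) + 1)⁻¹` are all positive. -/
theorem EPM_step_well_defined {n m : ℕ}
    (f : EuclideanSpace ℝ (Fin n) → ℝ)
    (c : Fin m → EuclideanSpace ℝ (Fin n) → ℝ)
    (hf : ConvexOn ℝ Set.univ f) (hc : ∀ i, ConcaveOn ℝ Set.univ (c i))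
    (hfd : ContDiff ℝ 1 f) (hcd : ∀ i, ContDiff ℝ 1 (c i))
    (Ω : Set (EuclideanSpace ℝ (Fin n)))
    (hΩ : Ω = {x | ∀ i, 0 ≤ c i x})
    (Xstar : Set (EuclideanSpace ℝ (Fin n)))
    (hXstar : Xstar = {x | x ∈ Ω ∧ ∀ z ∈ Ω, f x ≤ f z})
    (hne : Xstar.Nonempty) (hbd : Bornology.IsBounded Xstar)
    (y : EuclideanSpace ℝ (Fin n)) (hy : ∀ i, 0 < c i y)
    (hfy : ∀ x ∈ Xstar, f x < f y)
    (k : ℝ) (hk : 0 < k)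
    (lam : Fin m → ℝ) (hlam : ∀ i, 0 < lam i) :
    ∃ xhat : EuclideanSpace ℝ (Fin n),
      f xhat < f y ∧ (∀ i, 0 < k * c i xhat + 1) ∧
      IsMinOn (fun x => -Real.log (f y - f x)
          - k⁻¹ * ∑ i, lam i * Real.log (k * c i x + 1))
        {x : EuclideanSpace ℝ (Fin n) | f x < f y ∧ ∀ i, 0 < k * c i x + 1} xhat ∧
      gradient (fun x => -Real.log (f y - f x)
          - k⁻¹ * ∑ i, lam i * Real.log (k * c i x + 1)) xhat = 0 ∧
      ∀ i, 0 < lam i * (k * c i xhat + 1)⁻¹ :=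
  EPM_step_well_defined_general f c hf hc hfd hcd Ω hΩ Xstar hXstar hne hbd y hfy k hk lam hlam
end

section
/- Let f, c_i : ℝⁿ → ℝ (i = 1,…,m) be twice continuously differentiable, y with c_i(y) > 0 for all i, and let (x*, λ*) be a KKT pair of min{F(x,y) : c_i(x) ≥ 0} with f(x*) < f(y), active set {1,…,r} (c_i(x*) = 0 and λ*_i > 0 for i ≤ r; c_i(x*) > 0 and λ*_i = 0 for i > r), satisfying the second order sufficient optimality condition: ⟨∇²_{xx}L_y(x*,λ*)u,u⟩ ≥ μ‖u‖² for some μ > 0 and all u with ⟨∇c_i(x*),u⟩ = 0 (i ≤ r), and ∇c_1(x*),…,∇c_r(x*) linearly independent. Then there exist δ > 0 small enough, k₀ > 0 large enough and c > 0 independent of k, such that for every k ≥ k₀ and every λ ∈ ℝ^m with λ_i ≥ δ and |λ_i − λ*_i| ≤ δk for i ≤ r and 0 ≤ λ_i ≤ δk for i > r: (1) there exists x̂ = x̂(λ,k) with ∇_x 𝓛_y(x̂,λ,k) = 0 and k c_i(x̂) + 1 > 0 for all i; (2) with λ̂_i = λ_i (k c_i(x̂) + 1)⁻¹, the bound max{‖x̂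 − x*‖_∞, ‖λ̂ − λ*‖_∞} ≤ c k⁻¹ ‖λ − λ*‖_∞ holds; and (3) x̂(λ*,k) = x* and λ̂(λ*,k) = λ*, i.e. λ* is a fixed point of the multiplier map λ ↦ λ̂(λ,k). -/
/-!
Put `t = k⁻¹ (λ - λ*)` and `s = k⁻¹`. The gradient of the EDF at `x` is `∇ₓ L(x, λ̂)` with
`λ̂ᵢ = λᵢ / (k cᵢ(x) + 1)`, so `x̂` is a stationary point exactly when `(x̂, λ̂)` solves
`∇ₓ L(x, ν) = 0`, `νᵢ cᵢ(x) + s (νᵢ - λ*ᵢ) - tᵢ = 0`,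
and `(x*, λ*)` solves this system for `t = 0` and every `s`. At `t = s = 0` its Jacobian in
`(x, ν)` is the KKT matrix of the problem, which strict complementarity, the second order
sufficient condition and the linear independence of the active gradients make nonsingular.
The implicit function theorem gives a `C¹` solution `(x̂, λ̂)(t, s)`; it equals `(x*, λ*)` on the
axis `t = 0`, so its local Lipschitz bound reads `‖(x̂, λ̂) - (x*, λ*)‖ ≤ K ‖t‖ = K k⁻¹ ‖λ - λ*‖`.
For `k ≥ δ⁻¹` and `‖λ - λ*‖ ≤ δ k` (which the extended dual set ensures) `‖(t, s)‖ ≤ δ`.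
-/

open Real RealInnerProductSpace Filter Topology

theorem ContDiffAt.eventually_differentiableAt {𝕜 E F : Type*} [NontriviallyNormedField 𝕜]
    [NormedAddCommGroup E] [NormedSpace 𝕜 E] [NormedAddCommGroup F] [NormedSpace 𝕜 F]
    {f : E → F} {x : E} {n : WithTop ℕ∞} (hf : ContDiffAt 𝕜 n f x) (hn : 1 ≤ n) :
    ∀ᶠ y in 𝓝 x, DifferentiableAt 𝕜 f y :=
  ((hf.of_le hn).eventually (by simp)).mono fun _ h => h.differentiableAt one_ne_zero

section Partial

variable {𝕜 E₁ E₂ W : Type*} [NontriviallyNormedField 𝕜]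
  [NormedAddCommGroup E₁] [NormedSpace 𝕜 E₁] [NormedAddCommGroup E₂] [NormedSpace 𝕜 E₂]
  [NormedAddCommGroup W] [NormedSpace 𝕜 W] {f : E₁ × E₂ → W} {a : E₁} {b : E₂}

theorem DifferentiableAt.fderiv_prodMk_left (hf : DifferentiableAt 𝕜 f (a, b)) :
    fderiv 𝕜 (fun x => f (x, b)) a = fderiv 𝕜 f (a, b) ∘L .inl 𝕜 E₁ E₂ :=
  (hf.hasFDerivAt.comp a (hasFDerivAt_prodMk_left a b)).fderiv

theorem DifferentiableAt.fderiv_prodMk_right (hf : DifferentiableAt 𝕜 f (a, b)) :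
    fderiv 𝕜 (fun y => f (a, y)) b = fderiv 𝕜 f (a, b) ∘L .inr 𝕜 E₁ E₂ :=
  (hf.hasFDerivAt.comp b (hasFDerivAt_prodMk_right a b)).fderiv

theorem DifferentiableAt.fderiv_apply_prod (hf : DifferentiableAt 𝕜 f (a, b)) (u : E₁) (v : E₂) :
    fderiv 𝕜 f (a, b) (u, v) =
      fderiv 𝕜 (fun x => f (x, b)) a u + fderiv 𝕜 (fun y => f (a, y)) b v := by
  rw [hf.fderiv_prodMk_left, hf.fderiv_prodMk_right]
  exact ((fderiv 𝕜 f (a, b)).comp_inl_add_comp_inr (u, v)).symm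

end Partial

theorem ContDiffAt.exists_implicitFunction_norm_sub_le
    {𝕜 P₁ P₂ Z W : Type*} [RCLike 𝕜]
    [NormedAddCommGroup P₁] [NormedSpace 𝕜 P₁] [CompleteSpace P₁]
    [NormedAddCommGroup P₂] [NormedSpace 𝕜 P₂] [CompleteSpace P₂]
    [NormedAddCommGroup Z] [NormedSpace 𝕜 Z] [CompleteSpace Z]
    [NormedAddCommGroup W] [NormedSpace 𝕜 W] [CompleteSpace W]
    {G : (P₁ × P₂) × Z → W} {z₀ : Z} (hG : ContDiffAt 𝕜 1 G ((0, 0), z₀))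
    (hinv : (fderiv 𝕜 G ((0, 0), z₀) ∘L .inr 𝕜 (P₁ × P₂) Z).IsInvertible)
    (hfix : ∀ s, G ((0, s), z₀) = 0) :
    ∃ ψ : P₁ × P₂ → Z, ∃ K > 0, Tendsto ψ (𝓝 0) (𝓝 z₀) ∧
      ∀ᶠ p in 𝓝 0, G (p, ψ p) = 0 ∧ ‖ψ p - z₀‖ ≤ K * ‖p.1‖ := by
  set ψ := hG.implicitFunction one_ne_zero hinv
  have hψ₀ : ψ 0 = z₀ := hG.implicitFunction_apply_self one_ne_zero hinv
  have hψ : ContDiffAt 𝕜 1 ψ 0 := hG.contDiffAt_implicitFunction one_ne_zero hinv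
  obtain ⟨t, ht, hlip⟩ := hψ.exists_lipschitzOnWith_of_nnnorm_lt _ (lt_add_one ‖fderiv 𝕜 ψ 0‖₊)
  have haxis : Tendsto (fun p : P₁ × P₂ => ((0 : P₁), p.2)) (𝓝 0) (𝓝 0) :=
    (continuous_const.prodMk continuous_snd).tendsto' 0 0 rfl
  -- uniqueness of the implicit function makes it constant along the axis `{0} × P₂`
  have hψaxis : ∀ᶠ s in 𝓝 (0 : P₂), ψ (0, s) = z₀ := by
    have hto : Tendsto (fun s : P₂ => (((0 : P₁), s), z₀)) (𝓝 0) (𝓝 ((0, 0), z₀)) :=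
      ((continuous_const.prodMk continuous_id).prodMk continuous_const).tendsto' 0 _ rfl
    filter_upwards [hto.eventually (hG.eventually_apply_eq_iff_implicitFunction one_ne_zero hinv)]
      with s hs
    exact hs.1 (by rw [hfix, hfix])
  refine ⟨ψ, ‖fderiv 𝕜 ψ 0‖₊ + 1, by positivity, hψ₀ ▸ hψ.continuousAt.tendsto, ?_⟩
  filter_upwards [hG.eventually_apply_implicitFunction one_ne_zero hinv, ht, haxis.eventually ht,
    continuous_snd.tendsto' 0 0 rfl |>.eventually hψaxis] with p hsol hp hp' hpaxis
  refine ⟨by rwa [hfix] at hsol, ?_⟩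
  calc ‖ψ p - z₀‖ = ‖ψ p - ψ (0, p.2)‖ := by rw [hpaxis]
    _ ≤ _ * ‖p - (0, p.2)‖ := hlip.norm_sub_le hp hp'
    _ = _ * ‖p.1‖ := by simp [Prod.norm_def]

theorem Module.finrank_strongDual {𝕜 E : Type*} [NontriviallyNormedField 𝕜] [CompleteSpace 𝕜]
    [NormedAddCommGroup E] [NormedSpace 𝕜 E] [FiniteDimensional 𝕜 E] :
    Module.finrank 𝕜 (E →L[𝕜] 𝕜) = Module.finrank 𝕜 E :=
  LinearMap.toContinuousLinearMap.finrank_eq.symm.trans Subspace.dual_finrank_eq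

theorem ContinuousLinearMap.isInvertible_of_injective {𝕜 V W : Type*} [NontriviallyNormedField 𝕜]
    [CompleteSpace 𝕜] [NormedAddCommGroup V] [NormedSpace 𝕜 V] [FiniteDimensional 𝕜 V]
    [NormedAddCommGroup W] [NormedSpace 𝕜 W] [FiniteDimensional 𝕜 W] {f : V →L[𝕜] W}
    (hdim : Module.finrank 𝕜 V = Module.finrank 𝕜 W) (hf : Function.Injective f) :
    f.IsInvertible :=
  ⟨(LinearMap.linearEquivOfInjective (f : V →ₗ[𝕜] W) hf hdim).toContinuousLinearEquiv, rfl⟩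

theorem PiLp.norm_ofLp_le {p : ENNReal} [Fact (1 ≤ p)] {ι : Type*} [Fintype ι] {β : ι → Type*}
    [∀ i, SeminormedAddCommGroup (β i)] (z : PiLp p β) : ‖WithLp.ofLp z‖ ≤ ‖z‖ :=
  (pi_norm_le_iff_of_nonneg (norm_nonneg z)).2 fun i => PiLp.norm_apply_le z i

theorem norm_inv_smul_prod_inv_le {V : Type*} [SeminormedAddCommGroup V] [NormedSpace ℝ V]
    {δ k : ℝ} {v : V} (hδ : 0 < δ) (hk : δ⁻¹ ≤ k) (hv : ‖v‖ ≤ δ * k) :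
    ‖(k⁻¹ • v, k⁻¹)‖ ≤ δ := by
  have hk0 : 0 < k := (inv_pos.2 hδ).trans_le hk
  rw [Prod.norm_def, norm_smul, norm_inv, Real.norm_of_nonneg hk0.le]
  refine max_le ?_ (inv_le_of_inv_le₀ hδ hk)
  calc k⁻¹ * ‖v‖ ≤ k⁻¹ * (δ * k) := by gcongr
    _ = δ := by field_simp

theorem eq_zero_of_kkt_linearization {E ι : Type*} [NormedAddCommGroup E] [InnerProductSpace ℝ E]
    [Fintype ι] {p : ι → Prop} {g : ι → E} {cx lam v : ι → ℝ} {H : E →L[ℝ] E →L[ℝ] ℝ} {μ : ℝ}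
    {u : E} (hact : ∀ i, p i → cx i = 0 ∧ 0 < lam i) (hinact : ∀ i, ¬p i → 0 < cx i ∧ lam i = 0)
    (hμ : 0 < μ) (hsosc : ∀ u, (∀ i, p i → ⟪g i, u⟫ = 0) → H u u ≥ μ * ‖u‖ ^ 2)
    (hli : LinearIndependent ℝ fun i : {i // p i} => g i)
    (h₁ : ∀ w, H u w = ∑ i, v i * ⟪g i, w⟫) (h₂ : ∀ i, lam i * ⟪g i, u⟫ + v i * cx i = 0) :
    u = 0 ∧ v = 0 := by
  classical
  have hv : ∀ i, ¬p i → v i = 0 := fun i hi => by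
    simpa [(hinact i hi).2, (hinact i hi).1.ne'] using h₂ i
  have horth : ∀ i, p i → ⟪g i, u⟫ = 0 := fun i hi => by
    simpa [(hact i hi).1, (hact i hi).2.ne'] using h₂ i
  obtain rfl : u = 0 := by
    have hHuu : H u u = 0 := by
      rw [h₁ u]
      refine Finset.sum_eq_zero fun i _ => ?_
      by_cases hi : p i
      · rw [horth i hi, mul_zero]
      · rw [hv i hi, zero_mul]
    have := hsosc u horth
    rw [hHuu] at this
    by_contra hu
    linarith [mul_pos hμ (pow_pos (norm_pos_iff.2 hu) 2)]
  have hsum : ∑ i, v i • g i = 0 := by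
    have h := h₁ (∑ i, v i • g i)
    rw [map_zero, zero_apply] at h
    rw [← inner_self_eq_zero (𝕜 := ℝ), sum_inner]
    simpa only [real_inner_smul_left] using h.symm
  have hsub : ∑ i : {i // p i}, v i • g i = 0 := by
    rw [← hsum, ← Fintype.sum_subtype_add_sum_subtype p, left_eq_add]
    exact Finset.sum_eq_zero fun i _ => by rw [hv i i.2, zero_smul]
  refine ⟨rfl, funext fun i => ?_⟩
  by_cases hi : p i
  · exact Fintype.linearIndependent_iff.1 hli (fun i => v i) hsub ⟨i, hi⟩
  · exact hv i hi

noncomputable section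

variable {E ι : Type*} [NormedAddCommGroup E] [NormedSpace ℝ E] [Fintype ι]

def lagrangian (F : E → ℝ) (c : ι → E → ℝ) (ν : ι → ℝ) (x : E) : ℝ :=
  F x - ∑ i, ν i * c i x

def exteriorDistance (F : E → ℝ) (c : ι → E → ℝ) (k : ℝ) (lam : ι → ℝ) (x : E) : ℝ :=
  F x - k⁻¹ * ∑ i, lam i * Real.log (k * c i x + 1)

def multiplierUpdate (c : ι → E → ℝ) (k : ℝ) (lam : ι → ℝ) (x : E) (i : ι) : ℝ :=
  lam i * (k * c i x + 1)⁻¹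

/-- The system of the header at `q = ((t, s), (x, ν))`. -/
def epmResidual (F : E → ℝ) (c : ι → E → ℝ) (lamstar : ι → ℝ)
    (q : ((ι → ℝ) × ℝ) × (E × (ι → ℝ))) : (E →L[ℝ] ℝ) × (ι → ℝ) :=
  (fderiv ℝ (lagrangian F c q.2.2) q.2.1,
    fun i => q.2.2 i * c i q.2.1 + q.1.2 * (q.2.2 i - lamstar i) - q.1.1 i)

variable {F : E → ℝ} {c : ι → E → ℝ} {x : E} {lamstar : ι → ℝ}

theorem eventually_differentiableAt_lagrangian_data (hF : ContDiffAt ℝ 2 F x)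
    (hc : ∀ i, ContDiffAt ℝ 2 (c i) x) :
    ∀ᶠ x' in 𝓝 x, DifferentiableAt ℝ F x' ∧ ∀ i, DifferentiableAt ℝ (c i) x' :=
  (hF.eventually_differentiableAt (by norm_num)).and
    (eventually_all.2 fun i => (hc i).eventually_differentiableAt (by norm_num))

theorem hasFDerivAt_lagrangian (hF : DifferentiableAt ℝ F x)
    (hc : ∀ i, DifferentiableAt ℝ (c i) x) (ν : ι → ℝ) :
    HasFDerivAt (lagrangian F c ν) (fderiv ℝ F x - ∑ i, ν i • fderiv ℝ (c i) x) x :=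
  hF.hasFDerivAt.sub (.fun_sum fun i _ => (hc i).hasFDerivAt.const_mul (ν i))

theorem contDiffAt_lagrangian {n : WithTop ℕ∞} (hF : ContDiffAt ℝ n F x)
    (hc : ∀ i, ContDiffAt ℝ n (c i) x) (ν : ι → ℝ) : ContDiffAt ℝ n (lagrangian F c ν) x :=
  hF.sub (.sum fun i _ => contDiffAt_const.mul (hc i))

theorem fderiv_exteriorDistance (hF : DifferentiableAt ℝ F x)
    (hc : ∀ i, DifferentiableAt ℝ (c i) x) {k : ℝ} (hk : k ≠ 0) (lam : ι → ℝ)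
    (hpos : ∀ i, k * c i x + 1 ≠ 0) :
    fderiv ℝ (exteriorDistance F c k lam) x =
      fderiv ℝ (lagrangian F c (multiplierUpdate c k lam x)) x := by
  have hlog : ∀ i, HasFDerivAt (fun x => Real.log (k * c i x + 1))
      ((k * c i x + 1)⁻¹ • k • fderiv ℝ (c i) x) x := fun i =>
    (((hc i).hasFDerivAt.const_mul k).add_const 1).log (hpos i)
  have hdist : HasFDerivAt (exteriorDistance F c k lam)
      (fderiv ℝ F x - k⁻¹ • ∑ i, lam i • (k * c i x + 1)⁻¹ • k • fderiv ℝ (c i) x) x :=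
    hF.hasFDerivAt.sub ((HasFDerivAt.fun_sum fun i _ => (hlog i).const_mul (lam i)).const_mul k⁻¹)
  rw [hdist.fderiv, (hasFDerivAt_lagrangian hF hc _).fderiv, Finset.smul_sum]
  congr 1
  refine Finset.sum_congr rfl fun i _ => ?_
  simp only [smul_smul, multiplierUpdate]
  congr 1
  field_simp

theorem mul_add_one_eq_of_epmResidual_eq_zero {k : ℝ} (hk : k ≠ 0) {lam ν : ι → ℝ}
    (h : epmResidual F c lamstar ((k⁻¹ • (lam - lamstar), k⁻¹), (x, ν)) = 0) (i : ι) :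
    ν i * (k * c i x + 1) = lam i := by
  have hi := congrFun (congrArg Prod.snd h) i
  simp only [epmResidual, Pi.smul_apply, Pi.sub_apply, smul_eq_mul, Prod.snd_zero,
    Pi.zero_apply] at hi
  field_simp at hi
  linear_combination hi

theorem add_one_pos_of_epmResidual_eq_zero {k : ℝ} (hk : 0 < k) {lam ν : ι → ℝ}
    (h : epmResidual F c lamstar ((k⁻¹ • (lam - lamstar), k⁻¹), (x, ν)) = 0)
    (hpos : ∀ i, (0 < lam i ∧ 0 < ν i) ∨ 0 < c i x) (i : ι) :
    0 < k * c i x + 1 := by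
  rcases hpos i with ⟨hlam, hν⟩ | hci
  · rw [← mul_add_one_eq_of_epmResidual_eq_zero hk.ne' h i] at hlam
    exact pos_of_mul_pos_right hlam hν.le
  · positivity

theorem multiplierUpdate_eq_of_epmResidual_eq_zero {k : ℝ} (hk : k ≠ 0) {lam ν : ι → ℝ}
    (h : epmResidual F c lamstar ((k⁻¹ • (lam - lamstar), k⁻¹), (x, ν)) = 0)
    (hpos : ∀ i, k * c i x + 1 ≠ 0) :
    multiplierUpdate c k lam x = ν := funext fun i => by
  rw [multiplierUpdate, ← mul_add_one_eq_of_epmResidual_eq_zero hk h i,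
    mul_inv_cancel_right₀ (hpos i)]

theorem fderiv_exteriorDistance_eq_zero_of_epmResidual_eq_zero (hF : DifferentiableAt ℝ F x)
    (hc : ∀ i, DifferentiableAt ℝ (c i) x) {k : ℝ} (hk : k ≠ 0) {lam ν : ι → ℝ}
    (h : epmResidual F c lamstar ((k⁻¹ • (lam - lamstar), k⁻¹), (x, ν)) = 0)
    (hpos : ∀ i, k * c i x + 1 ≠ 0) :
    fderiv ℝ (exteriorDistance F c k lam) x = 0 := by
  rw [fderiv_exteriorDistance hF hc hk lam hpos,
    multiplierUpdate_eq_of_epmResidual_eq_zero hk h hpos]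
  exact congrArg Prod.fst h

theorem contDiffAt_epmResidual (hF : ContDiffAt ℝ 2 F x) (hc : ∀ i, ContDiffAt ℝ 2 (c i) x)
    (p : (ι → ℝ) × ℝ) (ν : ι → ℝ) :
    ContDiffAt ℝ 1 (epmResidual F c lamstar) (p, (x, ν)) := by
  have hexp : epmResidual F c lamstar =ᶠ[𝓝 (p, (x, ν))] fun q =>
      (fderiv ℝ F q.2.1 - ∑ i, q.2.2 i • fderiv ℝ (c i) q.2.1,
        fun i => q.2.2 i * c i q.2.1 + q.1.2 * (q.2.2 i - lamstar i) - q.1.1 i) := by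
    have hx : Tendsto (fun q : ((ι → ℝ) × ℝ) × (E × (ι → ℝ)) => q.2.1) (𝓝 (p, (x, ν))) (𝓝 x) :=
      (continuous_fst.comp continuous_snd).tendsto _
    filter_upwards [hx.eventually (eventually_differentiableAt_lagrangian_data hF hc)] with q hq
    rw [epmResidual, (hasFDerivAt_lagrangian hq.1 hq.2 _).fderiv]
  have hF1 : ContDiffAt ℝ 1 (fderiv ℝ F) x := hF.fderiv_right (by norm_num)
  have hc1 : ∀ i, ContDiffAt ℝ 1 (fderiv ℝ (c i)) x := fun i => (hc i).fderiv_right (by norm_num)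
  have hc1' : ∀ i, ContDiffAt ℝ 1 (c i) x := fun i => (hc i).of_le (by norm_num)
  refine ContDiffAt.congr_of_eventuallyEq ?_ hexp
  fun_prop

theorem epmResidual_axis_eq_zero (hstat : fderiv ℝ (lagrangian F c lamstar) x = 0)
    (hcomp : ∀ i, lamstar i * c i x = 0) (s : ℝ) :
    epmResidual F c lamstar ((0, s), (x, lamstar)) = 0 :=
  Prod.ext hstat (funext fun i => by simp [epmResidual, hcomp i])

theorem hasFDerivAt_epmResidual_primal (hF : ContDiffAt ℝ 2 F x)
    (hc : ∀ i, ContDiffAt ℝ 2 (c i) x) :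
    HasFDerivAt (fun x' => epmResidual F c lamstar ((0, 0), (x', lamstar)))
      ((fderiv ℝ (fderiv ℝ (lagrangian F c lamstar)) x).prod
        (.pi fun i => lamstar i • fderiv ℝ (c i) x)) x := by
  have hL := (((contDiffAt_lagrangian hF hc lamstar).fderiv_right (m := 1)
    (by norm_num)).differentiableAt one_ne_zero).hasFDerivAt
  convert hL.prodMk (hasFDerivAt_pi.2 fun i =>
    ((hc i).differentiableAt (by norm_num)).hasFDerivAt.const_mul (lamstar i)) using 1
  funext x'
  simp [epmResidual]

theorem hasFDerivAt_epmResidual_dual (hF : DifferentiableAt ℝ F x)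
    (hc : ∀ i, DifferentiableAt ℝ (c i) x) (ν₀ : ι → ℝ) :
    HasFDerivAt (fun ν => epmResidual F c lamstar ((0, 0), (x, ν)))
      ((-∑ i, (ContinuousLinearMap.proj (R := ℝ) i).smulRight (fderiv ℝ (c i) x)).prod
        (.pi fun i => c i x • ContinuousLinearMap.proj (R := ℝ) i)) ν₀ := by
  have hexp : (fun ν => epmResidual F c lamstar ((0, 0), (x, ν))) =
      fun ν => (fderiv ℝ F x - ∑ i, ν i • fderiv ℝ (c i) x, fun i => ν i * c i x) := by
    funext ν
    simp [epmResidual, (hasFDerivAt_lagrangian hF hc ν).fderiv]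
  rw [hexp]
  exact ((HasFDerivAt.fun_sum fun i _ => (hasFDerivAt_apply (𝕜 := ℝ) i ν₀).smul_const
    (fderiv ℝ (c i) x)).const_sub (fderiv ℝ F x)).prodMk
    (hasFDerivAt_pi.2 fun i => (hasFDerivAt_apply (𝕜 := ℝ) i ν₀).mul_const (c i x))

theorem fderiv_epmResidual_apply_inr (hF : ContDiffAt ℝ 2 F x)
    (hc : ∀ i, ContDiffAt ℝ 2 (c i) x) (u : E) (v : ι → ℝ) :
    fderiv ℝ (epmResidual F c lamstar) ((0, 0), (x, lamstar)) (0, (u, v)) =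
      (fderiv ℝ (fderiv ℝ (lagrangian F c lamstar)) x u - ∑ i, v i • fderiv ℝ (c i) x,
        fun i => lamstar i * fderiv ℝ (c i) x u + v i * c i x) := by
  have hG : DifferentiableAt ℝ (epmResidual F c lamstar) ((0, 0), (x, lamstar)) :=
    (contDiffAt_epmResidual hF hc 0 lamstar).differentiableAt one_ne_zero
  have hΦ : DifferentiableAt ℝ (fun z => epmResidual F c lamstar ((0, 0), z)) (x, lamstar) :=
    hG.comp (x, lamstar) ((differentiableAt_const _).prodMk differentiableAt_id)
  have hsplit := hΦ.fderiv_apply_prod u v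
  rw [hG.fderiv_prodMk_right, ContinuousLinearMap.comp_apply,
    ContinuousLinearMap.inr_apply] at hsplit
  rw [hsplit, (hasFDerivAt_epmResidual_primal hF hc).fderiv,
    (hasFDerivAt_epmResidual_dual (hF.differentiableAt (by norm_num))
      (fun i => (hc i).differentiableAt (by norm_num)) lamstar).fderiv]
  ext <;> simp [sub_eq_add_neg, add_comm, mul_comm]

theorem eventually_epm_admissible {p : ι → Prop} (hF : ContDiffAt ℝ 2 F x)
    (hc : ∀ i, ContDiffAt ℝ 2 (c i) x) (hact : ∀ i, p i → 0 < lamstar i)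
    (hinact : ∀ i, ¬p i → 0 < c i x) :
    ∀ᶠ z in 𝓝 (x, lamstar), (DifferentiableAt ℝ F z.1 ∧ ∀ i, DifferentiableAt ℝ (c i) z.1) ∧
      ∀ i, (p i ∧ 0 < z.2 i) ∨ 0 < c i z.1 := by
  refine (continuous_fst.tendsto _ |>.eventually
    (eventually_differentiableAt_lagrangian_data hF hc)).and (eventually_all.2 fun i => ?_)
  by_cases hi : p i
  · exact (((continuous_apply i).comp continuous_snd).tendsto _ |>.eventually_const_lt
      (hact i hi)).mono fun z hz => .inl ⟨hi, hz⟩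
  · exact (((hc i).continuousAt.tendsto.comp (continuous_fst.tendsto _)).eventually_const_lt
      (hinact i hi)).mono fun z hz => .inr hz

end

section InnerProductSpace

variable {E ι : Type*} [NormedAddCommGroup E] [InnerProductSpace ℝ E] [FiniteDimensional ℝ E]
  [Fintype ι] {F : E → ℝ} {c : ι → E → ℝ} {x : E} {lamstar : ι → ℝ}

theorem isInvertible_fderiv_epmResidual_comp_inr {p : ι → Prop} (hF : ContDiffAt ℝ 2 F x)
    (hc : ∀ i, ContDiffAt ℝ 2 (c i) x) (hact : ∀ i, p i → c i x = 0 ∧ 0 < lamstar i)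
    (hinact : ∀ i, ¬p i → 0 < c i x ∧ lamstar i = 0) {μ : ℝ} (hμ : 0 < μ)
    (hsosc : ∀ u, (∀ i, p i → ⟪gradient (c i) x, u⟫ = 0) →
      fderiv ℝ (fderiv ℝ (lagrangian F c lamstar)) x u u ≥ μ * ‖u‖ ^ 2)
    (hli : LinearIndependent ℝ fun i : {i // p i} => gradient (c i) x) :
    (fderiv ℝ (epmResidual F c lamstar) ((0, 0), (x, lamstar)) ∘L
      .inr ℝ ((ι → ℝ) × ℝ) (E × (ι → ℝ))).IsInvertible := by
  refine ContinuousLinearMap.isInvertible_of_injective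
    (by simp only [Module.finrank_prod, Module.finrank_strongDual]) ?_
  refine (injective_iff_map_eq_zero _).2 fun ⟨u, v⟩ h => ?_
  rw [ContinuousLinearMap.comp_apply, ContinuousLinearMap.inr_apply,
    fderiv_epmResidual_apply_inr hF hc, Prod.mk_eq_zero] at h
  obtain ⟨hu, hv⟩ := eq_zero_of_kkt_linearization hact hinact hμ hsosc hli
    (fun w => by simpa [sub_eq_zero, inner_gradient_left] using congrArg (· w) h.1)
    (fun i => by simpa [inner_gradient_left] using congrFun h.2 i)
  rw [hu, hv, Prod.mk_zero_zero]

theorem exists_epm_local_rate {p : ι → Prop} (hF : ContDiffAt ℝ 2 F x)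
    (hc : ∀ i, ContDiffAt ℝ 2 (c i) x) (hact : ∀ i, p i → c i x = 0 ∧ 0 < lamstar i)
    (hinact : ∀ i, ¬p i → 0 < c i x ∧ lamstar i = 0)
    (hstat : fderiv ℝ (lagrangian F c lamstar) x = 0) {μ : ℝ} (hμ : 0 < μ)
    (hsosc : ∀ u, (∀ i, p i → ⟪gradient (c i) x, u⟫ = 0) →
      fderiv ℝ (fderiv ℝ (lagrangian F c lamstar)) x u u ≥ μ * ‖u‖ ^ 2)
    (hli : LinearIndependent ℝ fun i : {i // p i} => gradient (c i) x) :
    ∃ δ > 0, ∃ K > 0, ∃ X : ℝ → (ι → ℝ) → E, ∀ k, δ⁻¹ ≤ k → ∀ lam : ι → ℝ,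
      (∀ i, p i → 0 < lam i) → ‖lam - lamstar‖ ≤ δ * k →
      fderiv ℝ (exteriorDistance F c k lam) (X k lam) = 0 ∧
      (∀ i, 0 < k * c i (X k lam) + 1) ∧
      ‖(X k lam, multiplierUpdate c k lam (X k lam)) - (x, lamstar)‖ ≤
        K * k⁻¹ * ‖lam - lamstar‖ ∧
      X k lamstar = x := by
  have hcomp : ∀ i, lamstar i * c i x = 0 := fun i => by
    by_cases hi : p i
    · rw [(hact i hi).1, mul_zero]
    · rw [(hinact i hi).2, zero_mul]
  obtain ⟨ψ, K, hK, hψ, hsol⟩ :=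
    (contDiffAt_epmResidual hF hc 0 lamstar).exists_implicitFunction_norm_sub_le
      (isInvertible_fderiv_epmResidual_comp_inr hF hc hact hinact hμ hsosc hli)
      (epmResidual_axis_eq_zero hstat hcomp)
  obtain ⟨ε, hε, hball⟩ := Metric.eventually_nhds_iff.1 <| hsol.and <| hψ.eventually <|
    eventually_epm_admissible hF hc (fun i hi => (hact i hi).2) (fun i hi => (hinact i hi).1)
  have hsmall : ∀ k lam, (ε / 2)⁻¹ ≤ k → ‖lam - lamstar‖ ≤ ε / 2 * k →
      dist (k⁻¹ • (lam - lamstar), k⁻¹) 0 < ε := fun k lam hk hlam => by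
    rw [dist_zero_right]
    exact (norm_inv_smul_prod_inv_le (half_pos hε) hk hlam).trans_lt (half_lt_self hε)
  refine ⟨ε / 2, half_pos hε, K, hK, fun k lam => (ψ (k⁻¹ • (lam - lamstar), k⁻¹)).1,
    fun k hk lam hlam hdev => ?_⟩
  have hk0 : 0 < k := (inv_pos.2 (half_pos hε)).trans_le hk
  obtain ⟨⟨hG, hbound⟩, ⟨hdF, hdc⟩, hadm⟩ := hball (hsmall k lam hk hdev)
  have hpos := add_one_pos_of_epmResidual_eq_zero hk0 hG fun i =>
    (hadm i).imp (fun h => ⟨hlam i h.1, h.2⟩) id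
  have hpos' := fun i => (hpos i).ne'
  refine ⟨fderiv_exteriorDistance_eq_zero_of_epmResidual_eq_zero hdF hdc hk0.ne' hG hpos', hpos,
    ?_, ?_⟩
  · rw [multiplierUpdate_eq_of_epmResidual_eq_zero hk0.ne' hG hpos']
    simpa [norm_smul, abs_of_pos hk0, mul_assoc] using hbound
  · have h0 := (hball (hsmall k lamstar hk (by simp; positivity))).1.2
    simp only [sub_self, smul_zero, norm_zero, mul_zero, norm_le_zero_iff, sub_eq_zero] at h0 ⊢
    rw [h0]

end InnerProductSpace

theorem EPM_local_rate_general {n m r : ℕ}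
    (f : EuclideanSpace ℝ (Fin n) → ℝ)
    (c : Fin m → EuclideanSpace ℝ (Fin n) → ℝ)
    (hf : ContDiff ℝ 2 f) (hc : ∀ i, ContDiff ℝ 2 (c i))
    (y xstar : EuclideanSpace ℝ (Fin n)) (lamstar : Fin m → ℝ)
    (hlt : f xstar < f y)
    (hact : ∀ i : Fin m, (i : ℕ) < r → c i xstar = 0 ∧ 0 < lamstar i)
    (hinact : ∀ i : Fin m, r ≤ (i : ℕ) → 0 < c i xstar ∧ lamstar i = 0)
    (hstat : gradient (fun x => -Real.log (f y - f x)
        - ∑ i, lamstar i * c i x) xstar = 0)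
    (μ : ℝ) (hμ : 0 < μ)
    (hsosc : ∀ u : EuclideanSpace ℝ (Fin n),
      (∀ i : Fin m, (i : ℕ) < r → ⟪gradient (c i) xstar, u⟫ = 0) →
      (fderiv ℝ (fderiv ℝ (fun x => -Real.log (f y - f x)
          - ∑ i, lamstar i * c i x)) xstar) u u ≥ μ * ‖u‖ ^ 2)
    (hli : LinearIndependent ℝ
      (fun i : {i : Fin m // (i : ℕ) < r} => gradient (c i.1) xstar)) :
    ∃ δ : ℝ, 0 < δ ∧ ∃ k₀ : ℝ, 0 < k₀ ∧ ∃ cc : ℝ, 0 < cc ∧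
      ∃ X : ℝ → (Fin m → ℝ) → EuclideanSpace ℝ (Fin n),
        ∀ k : ℝ, k₀ ≤ k → ∀ lam : Fin m → ℝ,
          (∀ i : Fin m, (i : ℕ) < r → δ ≤ lam i ∧ |lam i - lamstar i| ≤ δ * k) →
          (∀ i : Fin m, r ≤ (i : ℕ) → 0 ≤ lam i ∧ lam i ≤ δ * k) →
          -- (1) existence of a stationary point of the EDF
          gradient (fun x => -Real.log (f y - f x)
              - k⁻¹ * ∑ i, lam i * Real.log (k * c i x + 1)) (X k lam) = 0 ∧
          (∀ i, 0 < k * c i (X k lam) + 1) ∧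
          -- (2) the basic bound for the primal-dual pair
          max ‖(fun j => X k lam j - xstar j : Fin n → ℝ)‖
              ‖(fun i => lam i * (k * c i (X k lam) + 1)⁻¹ - lamstar i : Fin m → ℝ)‖
            ≤ cc * k⁻¹ * ‖(fun i => lam i - lamstar i : Fin m → ℝ)‖ ∧
          -- (3) λ* is a fixed point
          X k lamstar = xstar ∧
          (∀ i, lamstar i * (k * c i (X k lamstar) + 1)⁻¹ = lamstar i) := by
  obtain ⟨δ, hδ, K, hK, X, hX⟩ := exists_epm_local_rate (F := fun x => -Real.log (f y - f x))
    (p := fun i : Fin m => (i : ℕ) < r)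
    ((contDiffAt_const.sub hf.contDiffAt).log (sub_ne_zero.2 hlt.ne')).neg
    (fun i => (hc i).contDiffAt) hact (fun i hi => hinact i (not_lt.1 hi))
    ((InnerProductSpace.toDual ℝ _).symm.map_eq_zero_iff.1 hstat) hμ hsosc hli
  refine ⟨δ, hδ, δ⁻¹, inv_pos.2 hδ, K, hK, X, fun k hk lam hlam hlam' => ?_⟩
  have hdev : ‖lam - lamstar‖ ≤ δ * k := by
    refine (pi_norm_le_iff_of_nonneg (mul_pos hδ ((inv_pos.2 hδ).trans_le hk)).le).2 fun i => ?_
    rw [Real.norm_eq_abs, Pi.sub_apply]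
    rcases lt_or_ge (i : ℕ) r with hi | hi
    · exact (hlam i hi).2
    · rw [(hinact i hi).2, sub_zero, abs_of_nonneg (hlam' i hi).1]
      exact (hlam' i hi).2
  obtain ⟨hstat', hpos, hbound, hfix⟩ := hX k hk lam (fun i hi => hδ.trans_le (hlam i hi).1) hdev
  refine ⟨(InnerProductSpace.toDual ℝ _).symm.map_eq_zero_iff.2 hstat', hpos,
    max_le ((PiLp.norm_ofLp_le _).trans ((norm_fst_le _).trans hbound))
      ((norm_snd_le _).trans hbound), hfix, fun i => ?_⟩
  rw [hfix]
  rcases lt_or_ge (i : ℕ) r with hi | hi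
  · simp [(hact i hi).1]
  · simp [(hinact i hi).2]

/-- Local convergence bound for the EPM step (Theorem 3 of the paper): under the second
order sufficient optimality condition at a KKT pair `(x*, λ*)` with active set `{1,…,r}`,
there exist `δ > 0` small enough, `k₀ > 0` large enough and `c > 0` independent of `k`,
and a map `(k, λ) ↦ x̂(λ,k)`, such that for all `k ≥ k₀` and all `λ` in the extended dual
set (`λ_i ≥ δ`, `|λ_i - λ*_i| ≤ δ k` for `i ≤ r`; `0 ≤ λ_i ≤ δ k` for `i > r`):
(1) `∇_x 𝓛_y(x̂,λ,k) = 0` and `k c_i(x̂) + 1 > 0`;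
(2) with `λ̂_i = λ_i (k c_i(x̂) + 1)⁻¹`,
`max {‖x̂ - x*‖_∞, ‖λ̂ - λ*‖_∞} ≤ c k⁻¹ ‖λ - λ*‖_∞`;
(3) `x̂(λ*,k) = x*` and `λ̂(λ*,k) = λ*` (`λ*` is a fixed point of `λ ↦ λ̂(λ,k)`). -/
theorem EPM_local_rate {n m r : ℕ} (hrm : r ≤ m)
    (f : EuclideanSpace ℝ (Fin n) → ℝ)
    (c : Fin m → EuclideanSpace ℝ (Fin n) → ℝ)
    (hf : ContDiff ℝ 2 f) (hc : ∀ i, ContDiff ℝ 2 (c i))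
    (y xstar : EuclideanSpace ℝ (Fin n)) (lamstar : Fin m → ℝ)
    (hy : ∀ i, 0 < c i y) (hlt : f xstar < f y)
    (hact : ∀ i : Fin m, (i : ℕ) < r → c i xstar = 0 ∧ 0 < lamstar i)
    (hinact : ∀ i : Fin m, r ≤ (i : ℕ) → 0 < c i xstar ∧ lamstar i = 0)
    (hstat : gradient (fun x => -Real.log (f y - f x)
        - ∑ i, lamstar i * c i x) xstar = 0)
    (μ : ℝ) (hμ : 0 < μ)
    (hsosc : ∀ u : EuclideanSpace ℝ (Fin n),
      (∀ i : Fin m, (i : ℕ) < r → ⟪gradient (c i) xstar, u⟫ = 0) →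
      (fderiv ℝ (fderiv ℝ (fun x => -Real.log (f y - f x)
          - ∑ i, lamstar i * c i x)) xstar) u u ≥ μ * ‖u‖ ^ 2)
    (hli : LinearIndependent ℝ
      (fun i : {i : Fin m // (i : ℕ) < r} => gradient (c i.1) xstar)) :
    ∃ δ : ℝ, 0 < δ ∧ ∃ k₀ : ℝ, 0 < k₀ ∧ ∃ cc : ℝ, 0 < cc ∧
      ∃ X : ℝ → (Fin m → ℝ) → EuclideanSpace ℝ (Fin n),
        ∀ k : ℝ, k₀ ≤ k → ∀ lam : Fin m → ℝ,
          (∀ i : Fin m, (i : ℕ) < r → δ ≤ lam i ∧ |lam i - lamstar i| ≤ δ * k) →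
          (∀ i : Fin m, r ≤ (i : ℕ) → 0 ≤ lam i ∧ lam i ≤ δ * k) →
          -- (1) existence of a stationary point of the EDF
          gradient (fun x => -Real.log (f y - f x)
              - k⁻¹ * ∑ i, lam i * Real.log (k * c i x + 1)) (X k lam) = 0 ∧
          (∀ i, 0 < k * c i (X k lam) + 1) ∧
          -- (2) the basic bound for the primal-dual pair
          max ‖(fun j => X k lam j - xstar j : Fin n → ℝ)‖
              ‖(fun i => lam i * (k * c i (X k lam) + 1)⁻¹ - lamstar i : Fin m → ℝ)‖
            ≤ cc * k⁻¹ * ‖(fun i => lam i - lamstar i : Fin m → ℝ)‖ ∧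
          -- (3) λ* is a fixed point
          X k lamstar = xstar ∧
          (∀ i, lamstar i * (k * c i (X k lamstar) + 1)⁻¹ = lamstar i) :=
  EPM_local_rate_general f c hf hc y xstar lamstar hlt hact hinact hstat μ hμ hsosc hli
end
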